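/- arXiv:1312.4513 — 7 statements merged into one kernel-verified Lean document; each statement's English description precedes it below -/
import Mathlib

section
/- For α ∈ (0,1), β ≥ 1/2, and x > 0, one has D_{1/2,β}(x) = x^{-1/2}/Γ(β − 1/2), where D_{α,β}(x) = ∑_{n≥1} x^{αn-1}/Γ(β+αn-1) − ∑_{n≥0} x^{αn}/Γ(β+αn); in particular D_{1/2,β} is completely monotonic on (0,∞) for β ≥ 1/2. -/
open Real MeasureTheory

/-- The function D_{α,β}(x) = ∑_{n≥1} x^(αn-1)/Γ(β+αn-1) − ∑_{n≥0} x^(αn)/Γ(β+αn). -/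
noncomputable def Dab (α β x : ℝ) : ℝ :=
  (∑' n : ℕ, x ^ (α * (n + 1) - 1) / Real.Gamma (β + α * (n + 1) - 1)) -
    ∑' n : ℕ, x ^ (α * n) / Real.Gamma (β + α * n)

/-- A function is completely monotonic on (0,∞). -/
def CompletelyMonotonicOn (f : ℝ → ℝ) : Prop :=
  ∀ n : ℕ, ∀ x : ℝ, 0 < x → 0 ≤ (-1 : ℝ) ^ n * iteratedDeriv n f x

lemma eqOn_iteratedDeriv {f g : ℝ → ℝ} {s : Set ℝ} (hs : IsOpen s) (h : Set.EqOn f g s) :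
    ∀ n : ℕ, Set.EqOn (iteratedDeriv n f) (iteratedDeriv n g) s := by
  intro n
  induction n with
  | zero => simpa using h
  | succ n ih =>
    intro x hx
    rw [iteratedDeriv_succ, iteratedDeriv_succ]
    exact (ih.eventuallyEq_of_mem (hs.mem_nhds hx)).deriv_eq

lemma iteratedDeriv_const_mul_rpow (c p : ℝ) :
    ∀ n : ℕ, ∀ x : ℝ, 0 < x →
      iteratedDeriv n (fun y : ℝ => c * y ^ p) x
        = (c * ∏ i ∈ Finset.range n, (p - i)) * x ^ (p - n) := by
  intro n
  induction n with
  | zero => intro x hx; simp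
  | succ n ih =>
    intro x hx
    rw [iteratedDeriv_succ]
    have hev : iteratedDeriv n (fun y : ℝ => c * y ^ p)
        =ᶠ[nhds x] fun y => (c * ∏ i ∈ Finset.range n, (p - i)) * y ^ (p - n) := by
      filter_upwards [isOpen_Ioi.mem_nhds (Set.mem_Ioi.mpr hx)] with y hy
      exact ih y hy
    rw [hev.deriv_eq]
    have hd : HasDerivAt (fun y : ℝ => (c * ∏ i ∈ Finset.range n, (p - i)) * y ^ (p - n))
        ((c * ∏ i ∈ Finset.range n, (p - i)) * ((p - n) * x ^ (p - n - 1))) x :=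
      (Real.hasDerivAt_rpow_const (Or.inl hx.ne')).const_mul _
    rw [hd.deriv, Finset.prod_range_succ]
    have he : p - ((n : ℝ) + 1) = p - n - 1 := by ring
    push_cast
    rw [he]
    ring

lemma prod_neg_half (n : ℕ) :
    ∏ i ∈ Finset.range n, ((-(1/2) : ℝ) - i)
      = (-1) ^ n * ∏ i ∈ Finset.range n, ((i : ℝ) + 1/2) := by
  induction n with
  | zero => simp
  | succ n ih =>
    rw [Finset.prod_range_succ, Finset.prod_range_succ, ih, pow_succ]
    ring

theorem Dab_half (α β : ℝ) (hα : α ∈ Set.Ioo (0:ℝ) 1) (hβ : (1/2 : ℝ) ≤ β) :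
    (∀ x : ℝ, 0 < x → Dab (1/2) β x = x ^ (-(1/2) : ℝ) / Real.Gamma (β - 1/2)) ∧
      CompletelyMonotonicOn (Dab (1/2) β) := by
  have key : ∀ x : ℝ, 0 < x → Dab (1/2) β x = x ^ (-(1/2) : ℝ) / Real.Gamma (β - 1/2) := by
    intro x hx
    set a : ℕ → ℝ := fun n => x ^ (((n : ℝ) - 1) / 2) / Real.Gamma (β + ((n : ℝ) - 1) / 2)
      with ha
    have ht : ∀ n : ℕ, (0:ℝ) ≤ β + ((n : ℝ) - 1) / 2 := by
      intro n
      have : (0:ℝ) ≤ (n : ℝ) := Nat.cast_nonneg n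
      linarith
    have ha_nonneg : ∀ n, 0 ≤ a n := fun n =>
      div_nonneg (Real.rpow_nonneg hx.le _) (Real.Gamma_nonneg_of_nonneg (ht n))
    -- two-step recurrence
    have hrec : ∀ n : ℕ, (1:ℝ) ≤ β + ((n : ℝ) - 1) / 2 →
        a (n + 2) = (x / (β + ((n : ℝ) - 1) / 2)) * a n := by
      intro n h1
      have ht0 : (0:ℝ) < β + ((n : ℝ) - 1) / 2 := lt_of_lt_of_le one_pos h1
      have hG : 0 < Real.Gamma (β + ((n : ℝ) - 1) / 2) := Real.Gamma_pos_of_pos ht0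
      have he : ((↑(n + 2) : ℝ) - 1) / 2 = ((n : ℝ) - 1) / 2 + 1 := by push_cast; ring
      have hf : β + ((↑(n + 2) : ℝ) - 1) / 2 = (β + ((n : ℝ) - 1) / 2) + 1 := by
        push_cast; ring
      simp only [ha, he, hf]
      rw [show β + (((n : ℝ) - 1) / 2 + 1) = (β + ((n : ℝ) - 1) / 2) + 1 from by ring,
        Real.Gamma_add_one ht0.ne', Real.rpow_add hx, Real.rpow_one]
      field_simp
    set N : ℕ := ⌈4 * x⌉₊ + 2 with hN
    have hstep : ∀ n : ℕ, N ≤ n → a (n + 2) ≤ (1/2) * a n := by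
      intro n hn
      have hn4 : 4 * x + 1 ≤ (n : ℝ) := by
        have h1 : (4 * x : ℝ) ≤ (⌈4 * x⌉₊ : ℝ) := Nat.le_ceil _
        have h2 : ((⌈4 * x⌉₊ + 2 : ℕ) : ℝ) ≤ (n : ℝ) := by exact_mod_cast hn
        push_cast at h2
        linarith
      have ht1 : (2 * x) + 1/2 ≤ β + ((n : ℝ) - 1) / 2 := by linarith
      have hn2 : (2:ℝ) ≤ (n : ℝ) := by exact_mod_cast le_trans (by omega : 2 ≤ N) hn
      have ht2 : (1:ℝ) ≤ β + ((n : ℝ) - 1) / 2 := by linarith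
      have ht0 : (0:ℝ) < β + ((n : ℝ) - 1) / 2 := lt_of_lt_of_le one_pos ht2
      rw [hrec n ht2]
      have hratio : x / (β + ((n : ℝ) - 1) / 2) ≤ 1/2 := by
        rw [div_le_iff₀ ht0]
        linarith
      exact mul_le_mul_of_nonneg_right hratio (ha_nonneg n) |>.trans_eq rfl
    have heven : Summable fun k : ℕ => a (2 * k) := by
      apply summable_of_ratio_norm_eventually_le (r := 1/2) (by norm_num)
      filter_upwards [Filter.eventually_ge_atTop N] with k hk
      have h2k : N ≤ 2 * k := le_trans hk (by omega)
      have := hstep (2 * k) h2k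
      have he : 2 * (k + 1) = 2 * k + 2 := by ring
      rw [he, Real.norm_eq_abs, Real.norm_eq_abs, abs_of_nonneg (ha_nonneg _),
        abs_of_nonneg (ha_nonneg _)]
      exact this
    have hodd : Summable fun k : ℕ => a (2 * k + 1) := by
      apply summable_of_ratio_norm_eventually_le (r := 1/2) (by norm_num)
      filter_upwards [Filter.eventually_ge_atTop N] with k hk
      have h2k : N ≤ 2 * k + 1 := le_trans hk (by omega)
      have := hstep (2 * k + 1) h2k
      have he : 2 * (k + 1) + 1 = 2 * k + 1 + 2 := by ring
      rw [he, Real.norm_eq_abs, Real.norm_eq_abs, abs_of_nonneg (ha_nonneg _),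
        abs_of_nonneg (ha_nonneg _)]
      exact this
    have hsum : Summable a := heven.even_add_odd hodd
    have hA : (∑' n : ℕ, x ^ ((1/2 : ℝ) * (n + 1) - 1) / Real.Gamma (β + (1/2) * (n + 1) - 1))
        = ∑' n, a n := by
      refine tsum_congr fun n => ?_
      have e1 : (1/2 : ℝ) * ((n : ℝ) + 1) - 1 = ((n : ℝ) - 1) / 2 := by ring
      have e2 : β + (1/2 : ℝ) * ((n : ℝ) + 1) - 1 = β + ((n : ℝ) - 1) / 2 := by ring
      simp only [ha, e1, e2]
    have hB : (∑' n : ℕ, x ^ ((1/2 : ℝ) * n) / Real.Gamma (β + (1/2) * n))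
        = ∑' n, a (n + 1) := by
      refine tsum_congr fun n => ?_
      have e1 : ((↑(n + 1) : ℝ) - 1) / 2 = (1/2 : ℝ) * n := by push_cast; ring
      have e2 : β + ((↑(n + 1) : ℝ) - 1) / 2 = β + (1/2 : ℝ) * n := by push_cast; ring
      simp only [ha, e1, e2]
    have ha0 : a 0 = x ^ (-(1/2) : ℝ) / Real.Gamma (β - 1/2) := by
      have e2 : β + -(1/2:ℝ) = β - 1/2 := by ring
      simp only [ha]
      norm_num [e2]
    rw [Dab, hA, hB, Summable.tsum_eq_zero_add hsum, ← ha0]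
    ring
  refine ⟨key, ?_⟩
  intro n x hx
  have heq : Set.EqOn (Dab (1/2) β)
      (fun y : ℝ => (Real.Gamma (β - 1/2))⁻¹ * y ^ (-(1/2) : ℝ)) (Set.Ioi 0) := by
    intro y hy
    rw [key y (Set.mem_Ioi.mp hy)]
    rw [div_eq_inv_mul]
  have h1 := eqOn_iteratedDeriv isOpen_Ioi heq n (Set.mem_Ioi.mpr hx)
  rw [h1, iteratedDeriv_const_mul_rpow _ _ n x hx, prod_neg_half]
  have hpw : (-1 : ℝ) ^ n * (-1 : ℝ) ^ n = 1 := by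
    rw [← pow_add]
    exact Even.neg_one_pow ⟨n, rfl⟩
  have hc : (0:ℝ) ≤ (Real.Gamma (β - 1/2))⁻¹ :=
    inv_nonneg.mpr (Real.Gamma_nonneg_of_nonneg (by linarith))
  have hP : (0:ℝ) ≤ ∏ i ∈ Finset.range n, ((i : ℝ) + 1/2) :=
    Finset.prod_nonneg fun i _ => by positivity
  have hxp : (0:ℝ) ≤ x ^ ((-(1/2) : ℝ) - n) := Real.rpow_nonneg hx.le _
  calc (0:ℝ) ≤ (Real.Gamma (β - 1/2))⁻¹ * (∏ i ∈ Finset.range n, ((i : ℝ) + 1/2))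
        * x ^ ((-(1/2) : ℝ) - n) := by positivity
    _ = (-1 : ℝ) ^ n * ((Real.Gamma (β - 1/2))⁻¹
          * ((-1) ^ n * ∏ i ∈ Finset.range n, ((i : ℝ) + 1/2)) * x ^ ((-(1/2) : ℝ) - n)) := by
        rw [show (-1 : ℝ) ^ n * ((Real.Gamma (β - 1/2))⁻¹
          * ((-1) ^ n * ∏ i ∈ Finset.range n, ((i : ℝ) + 1/2)) * x ^ ((-(1/2) : ℝ) - n))
          = ((-1 : ℝ) ^ n * (-1 : ℝ) ^ n) * ((Real.Gamma (β - 1/2))⁻¹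
          * (∏ i ∈ Finset.range n, ((i : ℝ) + 1/2)) * x ^ ((-(1/2) : ℝ) - n)) from by ring,
          hpw, one_mul]
end

section
/- For every α ∈ (0,1) and β > 1, and x > 0: D_{α,β}(x) = (1/Γ(β−1)) ∫_0^1 (1−t)^{β−2} D_{α,1}(xt) dt, where D_{α,β}(x) = ∑_{n≥1} x^{αn-1}/Γ(β+αn-1) − ∑_{n≥0} x^{αn}/Γ(β+αn). -/
open Real MeasureTheory

/-!
Expanding `Dab α 1 (x * t)` into its two series, every term is `(x t) ^ c / Γ(1 + c)` with
`c > -1`, and the Beta integral turns `∫₀¹ (1 - t) ^ (β - 2) (x t) ^ c / Γ(1 + c) dt` into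
`Γ(β - 1) x ^ c / Γ(β + c)`, which is `Γ(β - 1)` times the matching term of `Dab α β x`.
All these terms are nonnegative and the series of their integrals converge (ratio test, using
`Γ(s + α) ≥ (s + α - 1) ^ α Γ(s)`, a consequence of the log-convexity of `Γ`), so summation
and integration may be interchanged.
-/

open Filter

theorem Real.Gamma_mul_rpow_le_Gamma_add {s α : ℝ} (hα : α ∈ Set.Ioo 0 1) (hs : 1 - α < s) :
    Gamma s * (s + α - 1) ^ α ≤ Gamma (s + α) := by
  set u := s + α - 1
  have hu : 0 < u := by linarith
  have hΓu : 0 ≤ Gamma u := (Gamma_pos_of_pos hu).le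
  -- log-convexity of `Γ` at `s = α u + (1 - α) (u + 1)`
  have hconvex : Gamma s ≤ Gamma u ^ α * Gamma (u + 1) ^ (1 - α) := by
    convert Gamma_mul_add_mul_le_rpow_Gamma_mul_rpow_Gamma (t := u + 1) hu (by linarith) hα.1
      (sub_pos.2 hα.2) (add_sub_cancel α 1) using 2
    ring
  calc Gamma s * u ^ α ≤ Gamma u ^ α * Gamma (u + 1) ^ (1 - α) * u ^ α := by gcongr
    _ = u ^ (α + (1 - α)) * Gamma u ^ (α + (1 - α)) := by
      rw [Gamma_add_one hu.ne', mul_rpow hu.le hΓu, rpow_add hu, rpow_add' hΓu (by simp)]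
      ring
    _ = Gamma (s + α) := by
      rw [add_sub_cancel, rpow_one, rpow_one, ← Gamma_add_one hu.ne', sub_add_cancel]

theorem summable_rpow_div_Gamma {α β c y : ℝ} (hα : α ∈ Set.Ioo 0 1) (hβc : 0 < β + c)
    (hy : 0 < y) : Summable fun n : ℕ => y ^ (α * n + c) / Gamma (β + (α * n + c)) := by
  have hs_pos (n : ℕ) : 0 < β + (α * n + c) := by
    linarith [mul_nonneg hα.1.le n.cast_nonneg]
  have hs_top : Tendsto (fun n : ℕ => β + (α * n + c)) atTop atTop := by
    refine tendsto_atTop_add_const_left _ _ (tendsto_atTop_add_const_right _ _ ?_)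
    exact tendsto_natCast_atTop_atTop.const_mul_atTop hα.1
  have hgrowth : Tendsto (fun n : ℕ => (β + (α * n + c) + α - 1) ^ α) atTop atTop :=
    (tendsto_rpow_atTop hα.1).comp (tendsto_atTop_add_const_right _ _
      (tendsto_atTop_add_const_right _ _ hs_top))
  refine summable_of_ratio_norm_eventually_le (r := 1 / 2) (by norm_num) ?_
  filter_upwards [hs_top.eventually_gt_atTop (1 - α), hgrowth.eventually_ge_atTop (2 * y ^ α)]
    with n hsn hn
  have hΓ := Gamma_mul_rpow_le_Gamma_add hα hsn
  have hΓpos := Gamma_pos_of_pos (hs_pos n)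
  have hnum : y ^ (α * ↑(n + 1) + c) = y ^ α * y ^ (α * n + c) := by
    rw [← rpow_add hy]; push_cast; ring_nf
  have hden : β + (α * ↑(n + 1) + c) = β + (α * n + c) + α := by push_cast; ring
  rw [Real.norm_of_nonneg (div_nonneg (by positivity) (Gamma_pos_of_pos (hs_pos _)).le),
    Real.norm_of_nonneg (div_nonneg (by positivity) hΓpos.le), hnum, hden]
  set s := β + (α * n + c)
  have hyα : 0 < y ^ α := rpow_pos_of_pos hy α
  calc y ^ α * y ^ (α * n + c) / Gamma (s + α)
      ≤ y ^ α * y ^ (α * n + c) / (2 * y ^ α * Gamma s) := by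
        gcongr
        calc 2 * y ^ α * Gamma s ≤ (s + α - 1) ^ α * Gamma s := by gcongr
          _ ≤ Gamma (s + α) := by linarith
    _ = 1 / 2 * (y ^ (α * n + c) / Gamma s) := by field_simp

theorem ofReal_rpow_mul_one_sub_rpow {u v t : ℝ} (ht : t ∈ Set.Icc 0 1) :
    ((t ^ (u - 1) * (1 - t) ^ (v - 1) : ℝ) : ℂ)
      = (t : ℂ) ^ ((u : ℂ) - 1) * (1 - t) ^ ((v : ℂ) - 1) := by
  rw [Complex.ofReal_mul, Complex.ofReal_cpow ht.1, Complex.ofReal_cpow (sub_nonneg.2 ht.2)]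
  push_cast
  rfl

theorem intervalIntegrable_rpow_mul_one_sub_rpow {u v : ℝ} (hu : 0 < u) (hv : 0 < v) :
    IntervalIntegrable (fun t => t ^ (u - 1) * (1 - t) ^ (v - 1)) volume 0 1 := by
  have h := (Complex.betaIntegral_convergent (u := u) (v := v) (by simpa) (by simpa)).congr
    (g := fun t => ((t ^ (u - 1) * (1 - t) ^ (v - 1) : ℝ) : ℂ))
    fun t ht => (ofReal_rpow_mul_one_sub_rpow
      (Set.Ioc_subset_Icc_self (by rwa [Set.uIoc_of_le zero_le_one] at ht))).symm
  rw [intervalIntegrable_iff] at h ⊢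
  simpa [IntegrableOn] using h.re

theorem integral_rpow_mul_one_sub_rpow {u v : ℝ} (hu : 0 < u) (hv : 0 < v) :
    ∫ t in (0 : ℝ)..1, t ^ (u - 1) * (1 - t) ^ (v - 1) = Gamma u * Gamma v / Gamma (u + v) := by
  have h := Complex.Gamma_mul_Gamma_eq_betaIntegral (s := u) (t := v) (by simpa) (by simpa)
  rw [Complex.betaIntegral, ← intervalIntegral.integral_congr (fun t ht =>
      ofReal_rpow_mul_one_sub_rpow (u := u) (v := v) (by rwa [Set.uIcc_of_le zero_le_one] at ht)),
    intervalIntegral.integral_ofReal, ← Complex.ofReal_add, Complex.Gamma_ofReal,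
    Complex.Gamma_ofReal, Complex.Gamma_ofReal, ← Complex.ofReal_mul] at h
  rw [eq_div_iff (Gamma_pos_of_pos (add_pos hu hv)).ne', mul_comm]
  exact_mod_cast h.symm

theorem one_sub_rpow_mul_rpow_div_Gamma_eq {β c x t : ℝ} (hx : 0 ≤ x) (ht : 0 ≤ t) :
    (1 - t) ^ (β - 2) * ((x * t) ^ c / Gamma (1 + c))
      = x ^ c / Gamma (1 + c) * (t ^ ((c + 1) - 1) * (1 - t) ^ ((β - 1) - 1)) := by
  rw [mul_rpow hx ht, add_sub_cancel_right, sub_sub, show (1 : ℝ) + 1 = 2 by norm_num]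
  ring

theorem intervalIntegrable_one_sub_rpow_mul_rpow_div_Gamma {β c x : ℝ} (hβ : 1 < β) (hc : -1 < c)
    (hx : 0 ≤ x) :
    IntervalIntegrable (fun t => (1 - t) ^ (β - 2) * ((x * t) ^ c / Gamma (1 + c))) volume 0 1 :=
  ((intervalIntegrable_rpow_mul_one_sub_rpow (by linarith) (by linarith)).const_mul _).congr
    fun t ht => (one_sub_rpow_mul_rpow_div_Gamma_eq hx
      (by rw [Set.uIoc_of_le zero_le_one] at ht; exact ht.1.le)).symm

theorem integral_one_sub_rpow_mul_rpow_div_Gamma {β c x : ℝ} (hβ : 1 < β) (hc : -1 < c)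
    (hx : 0 ≤ x) :
    ∫ t in (0 : ℝ)..1, (1 - t) ^ (β - 2) * ((x * t) ^ c / Gamma (1 + c))
      = Gamma (β - 1) * (x ^ c / Gamma (β + c)) := by
  rw [intervalIntegral.integral_congr fun t ht => one_sub_rpow_mul_rpow_div_Gamma_eq hx
      (by rw [Set.uIcc_of_le zero_le_one] at ht; exact ht.1),
    intervalIntegral.integral_const_mul,
    integral_rpow_mul_one_sub_rpow (by linarith) (by linarith),
    show c + 1 + (β - 1) = β + c by ring, add_comm c 1]
  have := (Gamma_pos_of_pos (by linarith : 0 < 1 + c)).ne'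
  field_simp

theorem integral_tsum_sub_of_nonneg {X : Type*} [MeasurableSpace X] {μ : Measure X}
    {F G : ℕ → X → ℝ} (hF : ∀ n, Integrable (F n) μ) (hG : ∀ n, Integrable (G n) μ)
    (hF0 : ∀ n, 0 ≤ᵐ[μ] F n) (hG0 : ∀ n, 0 ≤ᵐ[μ] G n)
    (hFs : Summable fun n => ∫ a, F n a ∂μ) (hGs : Summable fun n => ∫ a, G n a ∂μ) :
    ∫ a, ∑' n, (F n a - G n a) ∂μ = ∑' n, ∫ a, F n a ∂μ - ∑' n, ∫ a, G n a ∂μ := by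
  have hnorm (n : ℕ) : ∫ a, ‖F n a - G n a‖ ∂μ ≤ ∫ a, F n a ∂μ + ∫ a, G n a ∂μ := by
    rw [← integral_add (hF n) (hG n)]
    refine integral_mono_ae ((hF n).sub (hG n)).norm ((hF n).add (hG n)) ?_
    filter_upwards [hF0 n, hG0 n] with a hFa hGa
    simpa [Real.norm_of_nonneg hFa, Real.norm_of_nonneg hGa] using norm_sub_le (F n a) (G n a)
  rw [← integral_tsum_of_summable_integral_norm (F := fun n a => F n a - G n a)
    (fun n => (hF n).sub (hG n))
    (.of_nonneg_of_le (fun n => integral_nonneg fun _ => norm_nonneg _) hnorm (hFs.add hGs))]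
  simp_rw [integral_sub (hF _) (hG _)]
  exact hFs.tsum_sub hGs

theorem integral_one_sub_rpow_mul_tsum_sub {β x : ℝ} {e e' : ℕ → ℝ} (hβ : 1 < β) (hx : 0 < x)
    (he : ∀ n, -1 < e n) (he' : ∀ n, -1 < e' n)
    (hs₁ : ∀ y > 0, Summable fun n => y ^ e n / Gamma (1 + e n))
    (hs₁' : ∀ y > 0, Summable fun n => y ^ e' n / Gamma (1 + e' n))
    (hsβ : Summable fun n => x ^ e n / Gamma (β + e n))
    (hsβ' : Summable fun n => x ^ e' n / Gamma (β + e' n)) :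
    ∫ t in (0 : ℝ)..1, (1 - t) ^ (β - 2) *
        (∑' n, (x * t) ^ e n / Gamma (1 + e n) - ∑' n, (x * t) ^ e' n / Gamma (1 + e' n))
      = Gamma (β - 1) *
        (∑' n, x ^ e n / Gamma (β + e n) - ∑' n, x ^ e' n / Gamma (β + e' n)) := by
  set F : (ℕ → ℝ) → ℕ → ℝ → ℝ :=
    fun e n t => (1 - t) ^ (β - 2) * ((x * t) ^ e n / Gamma (1 + e n))
  have hint {e : ℕ → ℝ} (he : ∀ n, -1 < e n) (n : ℕ) : IntegrableOn (F e n) (Set.Ioc 0 1) :=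
    (intervalIntegrable_one_sub_rpow_mul_rpow_div_Gamma hβ (he n) hx.le).1
  have hnonneg {e : ℕ → ℝ} (he : ∀ n, -1 < e n) (n : ℕ) :
      0 ≤ᵐ[volume.restrict (Set.Ioc 0 1)] F e n := by
    refine ae_restrict_of_forall_mem measurableSet_Ioc fun t ht => ?_
    have := Gamma_pos_of_pos (by linarith [he n] : 0 < 1 + e n)
    have : 0 ≤ 1 - t := sub_nonneg.2 ht.2
    have : 0 ≤ x * t := mul_nonneg hx.le ht.1.le
    positivity
  have hval {e : ℕ → ℝ} (he : ∀ n, -1 < e n) (n : ℕ) :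
      ∫ t in Set.Ioc 0 1, F e n t = Gamma (β - 1) * (x ^ e n / Gamma (β + e n)) := by
    rw [← intervalIntegral.integral_of_le zero_le_one]
    exact integral_one_sub_rpow_mul_rpow_div_Gamma hβ (he n) hx.le
  have hexpand : Set.EqOn (fun t => (1 - t) ^ (β - 2) *
        (∑' n, (x * t) ^ e n / Gamma (1 + e n) - ∑' n, (x * t) ^ e' n / Gamma (1 + e' n)))
      (fun t => ∑' n, (F e n t - F e' n t)) (Set.Ioc 0 1) := fun t ht => by
    have hxt : 0 < x * t := mul_pos hx ht.1
    simp only [F]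
    rw [mul_sub, ← tsum_mul_left, ← tsum_mul_left,
      ((hs₁ _ hxt).mul_left _).tsum_sub ((hs₁' _ hxt).mul_left _)]
  rw [intervalIntegral.integral_of_le zero_le_one, setIntegral_congr_fun measurableSet_Ioc hexpand,
    integral_tsum_sub_of_nonneg (hint he) (hint he') (hnonneg he) (hnonneg he')
      ((hsβ.mul_left _).congr fun n => (hval he n).symm)
      ((hsβ'.mul_left _).congr fun n => (hval he' n).symm),
    tsum_congr (hval he), tsum_congr (hval he'), tsum_mul_left, tsum_mul_left, mul_sub]

theorem Dab_eq_tsum_sub (α β y : ℝ) :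
    Dab α β y = ∑' n : ℕ, y ^ (α * (n + 1) - 1) / Gamma (β + (α * (n + 1) - 1))
      - ∑' n : ℕ, y ^ (α * n) / Gamma (β + α * n) := by
  simp only [Dab, add_sub_assoc]

theorem summable_Dab_left {α β y : ℝ} (hα : α ∈ Set.Ioo 0 1) (hβ : 1 - α < β) (hy : 0 < y) :
    Summable fun n : ℕ => y ^ (α * (n + 1) - 1) / Gamma (β + (α * (n + 1) - 1)) :=
  (summable_rpow_div_Gamma (β := β) (c := α - 1) hα (by linarith) hy).congr fun n => by ring_nf

theorem summable_Dab_right {α β y : ℝ} (hα : α ∈ Set.Ioo 0 1) (hβ : 0 < β) (hy : 0 < y) :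
    Summable fun n : ℕ => y ^ (α * n) / Gamma (β + α * n) := by
  simpa using summable_rpow_div_Gamma (c := 0) hα (by simpa) hy

theorem Dab_beta_integral (α β x : ℝ) (hα : α ∈ Set.Ioo (0:ℝ) 1) (hβ : 1 < β)
    (hx : 0 < x) :
    Dab α β x =
      (1 / Real.Gamma (β - 1)) * ∫ t in (0:ℝ)..1, (1 - t) ^ (β - 2) * Dab α 1 (x * t) := by
  have he (n : ℕ) : -1 < α * (n + 1) - 1 := by linarith [mul_pos hα.1 n.cast_add_one_pos]
  have he' (n : ℕ) : -1 < α * n := by linarith [mul_nonneg hα.1.le n.cast_nonneg]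
  have key := integral_one_sub_rpow_mul_tsum_sub hβ hx he he'
    (fun y hy => summable_Dab_left hα (by linarith [hα.1]) hy)
    (fun y hy => summable_Dab_right hα one_pos hy)
    (summable_Dab_left hα (by linarith [hα.1]) hx) (summable_Dab_right hα (by linarith) hx)
  simp only [Dab_eq_tsum_sub]
  rw [key, ← mul_assoc, one_div_mul_cancel (Gamma_pos_of_pos (by linarith)).ne', one_mul]
end

section
/- For α ∈ (1/2, 1), r > 0, θ ∈ (−π, π), and γ = α − 1/2, one has Re(e^{iθ/2} F_α(r e^{iθ})) ≥ 0, where F_α(z) = (1 − z^{α−1})/(z^α − 1) with principal branches. -/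
/-!
Write `z = r e^{iθ}`, `A = r^α`, `B = r^{α-1}` and `γ = α - 1/2`. Multiplying numerator and
denominator by the conjugate of the denominator, the sign of the real part is that of
`Re (e^{iθ/2} (1 - B e^{i(α-1)θ}) (A e^{-iαθ} - 1)) = (A + B) cos (γθ) - (1 + AB) cos (θ/2)`,
which equals `(A + B) (cos (γθ) - cos (θ/2)) + (A - 1)(1 - B) cos (θ/2)`. Both terms are
nonnegative: `|γθ| ≤ |θ/2| ≤ π/2`, and `A - 1`, `1 - B` both have the sign of `r - 1`.
-/

open Real Complex ComplexConjugate

lemma Complex.ofReal_mul_exp_mul_I_cpow {r θ : ℝ} (hr : 0 < r) (hθ : θ ∈ Set.Ioc (-π) π)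
    (t : ℝ) :
    ((r : ℂ) * exp (θ * I)) ^ (t : ℂ) = ((r ^ t : ℝ) : ℂ) * exp ((t * θ : ℝ) * I) := by
  have hlog : log ((r : ℂ) * exp (θ * I)) = Real.log r + θ * I := by
    rw [log_ofReal_mul hr (exp_ne_zero _), log_exp] <;> simp [hθ.1, hθ.2]
  rw [cpow_def_of_ne_zero (mul_ne_zero (by exact_mod_cast hr.ne') (exp_ne_zero _)), hlog,
    Real.rpow_def_of_pos hr, add_mul, exp_add]
  push_cast
  ring_nf

lemma Complex.re_div_eq_re_mul_conj_div_normSq (w d : ℂ) :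
    (w / d).re = (w * conj d).re / normSq d := by
  simp only [div_re, mul_re, conj_re, conj_im]
  ring

lemma Complex.re_exp_mul_one_sub_mul_conj (a θ A B : ℝ) :
    (exp ((θ / 2 : ℝ) * I) * (1 - B * exp (((a - 1) * θ : ℝ) * I)) *
        conj (A * exp ((a * θ : ℝ) * I) - 1)).re
      = (A + B) * Real.cos ((a - 1 / 2) * θ) - (1 + A * B) * Real.cos (θ / 2) := by
  have hexpand : exp ((θ / 2 : ℝ) * I) * (1 - B * exp (((a - 1) * θ : ℝ) * I)) *
        conj (A * exp ((a * θ : ℝ) * I) - 1)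
      = A * exp ((-((a - 1 / 2) * θ) : ℝ) * I) + B * exp (((a - 1 / 2) * θ : ℝ) * I)
        - exp ((θ / 2 : ℝ) * I) - ((A * B : ℝ) : ℂ) * exp ((-(θ / 2) : ℝ) * I) := by
    have hexp : ∀ x y : ℝ, exp (x * I) * exp (y * I) = exp ((x + y : ℝ) * I) := by
      intro x y
      rw [← exp_add]
      push_cast
      ring_nf
    have hconj : conj (exp ((a * θ : ℝ) * I)) = exp ((-(a * θ) : ℝ) * I) := by
      rw [← exp_conj, map_mul, conj_ofReal, conj_I, ofReal_neg, neg_mul_comm]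
    simp only [map_sub, map_mul, map_one, conj_ofReal, hconj]
    have h₁ := hexp (θ / 2) (-(a * θ))
    have h₂ := hexp (θ / 2) ((a - 1) * θ)
    have h₃ := hexp ((a - 1 / 2) * θ) (-(a * θ))
    rw [show θ / 2 + -(a * θ) = -((a - 1 / 2) * θ) by ring] at h₁
    rw [show θ / 2 + (a - 1) * θ = (a - 1 / 2) * θ by ring] at h₂
    rw [show (a - 1 / 2) * θ + -(a * θ) = -(θ / 2) by ring, ← h₂] at h₃
    push_cast at h₁ h₂ h₃ ⊢
    linear_combination A * h₁ + B * h₂ - A * B * h₃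
  rw [hexpand]
  simp only [sub_re, add_re, mul_re, ofReal_re, ofReal_im,
    exp_ofReal_mul_I_re, exp_ofReal_mul_I_im, Real.cos_neg]
  ring

lemma Real.cos_le_cos_of_abs_le {x y : ℝ} (hxy : |x| ≤ |y|) (hy : |y| ≤ π) :
    Real.cos y ≤ Real.cos x := by
  rw [← Real.cos_abs x, ← Real.cos_abs y]
  exact Real.cos_le_cos_of_nonneg_of_le_pi (abs_nonneg x) hy hxy

lemma Real.rpow_sub_one_mul_one_sub_rpow_sub_one_nonneg {r α : ℝ} (hr : 0 < r) (hα₀ : 0 ≤ α) (hα₁ : α ≤ 1) :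
    0 ≤ (r ^ α - 1) * (1 - r ^ (α - 1)) := by
  rcases le_or_gt 1 r with h | h
  · exact mul_nonneg (sub_nonneg.2 (Real.one_le_rpow h hα₀))
      (sub_nonneg.2 (Real.rpow_le_one_of_one_le_of_nonpos h (by linarith)))
  · exact mul_nonneg_of_nonpos_of_nonpos (sub_nonpos.2 (Real.rpow_le_one hr.le h.le hα₀))
      (sub_nonpos.2 (Real.one_le_rpow_of_pos_of_le_one_of_nonpos hr h.le (by linarith)))

lemma add_mul_sub_one_add_mul_nonneg {A B c C : ℝ} (hAB : 0 ≤ A + B) (hc : 0 ≤ c)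
    (hcC : c ≤ C) (h : 0 ≤ (A - 1) * (1 - B)) :
    0 ≤ (A + B) * C - (1 + A * B) * c := by
  have hsplit : (A + B) * C - (1 + A * B) * c = (A + B) * (C - c) + (A - 1) * (1 - B) * c := by
    ring
  rw [hsplit]
  exact add_nonneg (mul_nonneg hAB (sub_nonneg.2 hcC)) (mul_nonneg h hc)

theorem re_nonneg_Fa (α : ℝ) (hα : α ∈ Set.Ioo (1/2 : ℝ) 1) (r θ : ℝ) (hr : 0 < r)
    (hθ : θ ∈ Set.Ioo (-Real.pi) Real.pi) :
    0 ≤ (Complex.exp ((θ / 2 : ℝ) * Complex.I) *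
      ((1 - ((r : ℂ) * Complex.exp ((θ : ℝ) * Complex.I)) ^ ((α : ℂ) - 1)) /
        (((r : ℂ) * Complex.exp ((θ : ℝ) * Complex.I)) ^ ((α : ℂ)) - 1))).re := by
  obtain ⟨hα₁, hα₂⟩ := hα
  obtain ⟨hθ₁, hθ₂⟩ := hθ
  have hpow := ofReal_mul_exp_mul_I_cpow hr ⟨hθ₁, hθ₂.le⟩
  rw [← ofReal_one, ← ofReal_sub, hpow, hpow, ofReal_one, ← mul_div_assoc,
    re_div_eq_re_mul_conj_div_normSq, re_exp_mul_one_sub_mul_conj]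
  have hcos : Real.cos (θ / 2) ≤ Real.cos ((α - 1 / 2) * θ) := by
    refine Real.cos_le_cos_of_abs_le ?_ (by rw [abs_le]; constructor <;> linarith)
    rw [abs_mul, abs_div, abs_two, abs_of_pos (by linarith : (0 : ℝ) < α - 1 / 2)]
    nlinarith [abs_nonneg θ]
  refine div_nonneg (add_mul_sub_one_add_mul_nonneg (by positivity) ?_ hcos
    (Real.rpow_sub_one_mul_one_sub_rpow_sub_one_nonneg hr (by linarith) hα₂.le)) (normSq_nonneg _)
  exact (Real.cos_pos_of_mem_Ioo ⟨by linarith, by linarith⟩).le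
end

section
/- For α ∈ (0,1) and s ∈ (−α, α−1) (nonempty only when this interval is nonempty, i.e., it must be interpreted for α ∈ (1/2,1)), the Mellin transform M_α(s) = ∫_0^∞ t^s · sin(πα) t^{α−1}(1+t)/(π(t^{2α} − 2cos(πα)t^α + 1)) dt equals − sin(π/α) sin(πs) / (α sin(πs/α) sin(π(s+1)/α)). -/
/-!
Write `D(t) = t^{2α} - 2 cos(πα) t^α + 1` and `ψ = π - πα ∈ (0, π/2)`, so that
`-cos(πα) = cos ψ > 0`. Since `t^s t^{α-1} (1 + t) = t^{(α+s)-1} + t^{(α+s+1)-1}`, the integral is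
`(sin πα / π) (J(α + s) + J(α + s + 1))` with `J(ν) = ∫ t^{ν-1} / D(t) dt`.

The substitution `u = t^α` gives `J(α + r) = α⁻¹ K(1 + r/α)`, where
`K(μ) = ∫ u^{μ-1} / (u² + 2 cos ψ u + 1) du`. For `0 < μ < 1` the factorisation
`u² + 2 cos ψ u + 1 = (u + e^{-iψ})(u + e^{iψ})` and partial fractions reduce `K(μ)` to the
Stieltjes integral `∫ x^{μ-1} / (x + a) dx = π a^{μ-1} / sin πμ`, which for real `a > 0` is the beta
integral `B(μ, 1 - μ)` and extends to `Re a > 0` by analytic continuation in `a`. This gives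
`K(μ) = π sin((1 - μ)ψ) / (sin ψ sin πμ)`; the inversion `u ↦ 1/u` shows `K(μ) = K(2 - μ)`, so the
same formula holds for `1 < μ < 2`. The two terms then combine through the identity
`sin(x - a) sin b + sin(b - x) sin a = sin(b - a) sin x`.
-/

open Real MeasureTheory Set Filter Topology

theorem integrableOn_Ioi_of_norm_le_rpow {E : Type*} [NormedAddCommGroup E] {f : ℝ → E}
    {p q C : ℝ} (hp : -1 < p) (hq : q < -1) (hf : ContinuousOn f (Ioi 0))
    (h_zero : ∀ x ∈ Ioc (0 : ℝ) 1, ‖f x‖ ≤ C * x ^ p)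
    (h_top : ∀ x ∈ Ioi (1 : ℝ), ‖f x‖ ≤ C * x ^ q) :
    IntegrableOn f (Ioi 0) := by
  rw [← Ioc_union_Ioi_eq_Ioi zero_le_one]
  refine IntegrableOn.union ?_ ?_
  · refine Integrable.mono' (((intervalIntegrable_iff_integrableOn_Ioc_of_le zero_le_one).mp
      (intervalIntegral.intervalIntegrable_rpow' hp)).const_mul C)
      ((hf.mono Ioc_subset_Ioi_self).aestronglyMeasurable measurableSet_Ioc) ?_
    exact (ae_restrict_iff' measurableSet_Ioc).mpr (.of_forall h_zero)
  · refine Integrable.mono' ((integrableOn_Ioi_rpow_of_lt hq one_pos).const_mul C)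
      ((hf.mono (Ioi_subset_Ioi zero_le_one)).aestronglyMeasurable measurableSet_Ioi) ?_
    exact (ae_restrict_iff' measurableSet_Ioi).mpr (.of_forall h_top)

theorem integrableOn_rpow_div_add {p a : ℝ} (hp₀ : 0 < p) (hp₁ : p < 1) (ha : 0 < a) :
    IntegrableOn (fun x : ℝ ↦ x ^ (p - 1) / (x + a)) (Ioi 0) := by
  refine integrableOn_Ioi_of_norm_le_rpow (p := p - 1) (q := p - 2) (C := a⁻¹ + 1)
    (by linarith) (by linarith) ?_ (fun x hx ↦ ?_) (fun x hx ↦ ?_)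
  · exact ContinuousOn.div (continuousOn_id.rpow_const fun x hx ↦ .inl (ne_of_gt hx))
      (by fun_prop) fun x hx ↦ by linarith [mem_Ioi.mp hx]
  · obtain ⟨hx₀, -⟩ := hx
    have : (x + a)⁻¹ ≤ a⁻¹ := inv_anti₀ ha (by linarith)
    rw [norm_of_nonneg (by positivity), div_eq_inv_mul]
    gcongr
    linarith
  · have hx₀ : 0 < x := one_pos.trans hx
    have : 0 ≤ a⁻¹ := by positivity
    calc ‖x ^ (p - 1) / (x + a)‖ ≤ x ^ (p - 1) / x := by
          rw [norm_of_nonneg (by positivity)]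
          gcongr
          linarith
      _ = x ^ (p - 2) := by rw [← rpow_sub_one hx₀.ne']; ring_nf
      _ ≤ (a⁻¹ + 1) * x ^ (p - 2) := le_mul_of_one_le_left (by positivity) (by linarith)

theorem Complex.betaIntegral_one_sub {p : ℂ} (hp₀ : 0 < p.re) (hp₁ : p.re < 1) :
    betaIntegral p (1 - p) = π / sin (π * p) := by
  have h := Gamma_mul_Gamma_eq_betaIntegral hp₀ (by simpa using hp₁ : 0 < (1 - p).re)
  rwa [add_sub_cancel, Gamma_one, one_mul, Gamma_mul_Gamma_one_sub, eq_comm] at h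

theorem integral_rpow_mul_one_sub_rpow_neg {p : ℝ} (hp₀ : 0 < p) (hp₁ : p < 1) :
    ∫ u in Ioo (0 : ℝ) 1, u ^ (p - 1) * (1 - u) ^ (-p) = π / sin (π * p) := by
  have hβ := Complex.betaIntegral_one_sub (p := p) (by simpa using hp₀) (by simpa using hp₁)
  rw [Complex.betaIntegral, intervalIntegral.integral_of_le zero_le_one,
    integral_Ioc_eq_integral_Ioo] at hβ
  have h_ofReal : ∫ u in Ioo (0 : ℝ) 1, (u : ℂ) ^ ((p : ℂ) - 1) * (1 - (u : ℂ)) ^ (1 - (p : ℂ) - 1)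
      = ((∫ u in Ioo (0 : ℝ) 1, u ^ (p - 1) * (1 - u) ^ (-p) : ℝ) : ℂ) := by
    refine (setIntegral_congr_fun measurableSet_Ioo fun u hu ↦ ?_).trans integral_ofReal
    change _ = ((u ^ (p - 1) * (1 - u) ^ (-p) : ℝ) : ℂ)
    rw [Complex.ofReal_mul, Complex.ofReal_cpow hu.1.le,
      Complex.ofReal_cpow (by linarith [hu.2] : (0 : ℝ) ≤ 1 - u)]
    push_cast
    ring_nf
  exact_mod_cast h_ofReal ▸ hβ

theorem integral_rpow_div_add_one {p : ℝ} (hp₀ : 0 < p) (hp₁ : p < 1) :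
    ∫ x in Ioi (0 : ℝ), x ^ (p - 1) / (x + 1) = π / sin (π * p) := by
  have h_image : (fun u : ℝ ↦ u / (1 - u)) '' Ioo 0 1 = Ioi 0 := by
    ext x
    refine ⟨fun ⟨u, ⟨hu₀, hu₁⟩, hx⟩ ↦ hx ▸ div_pos hu₀ (by linarith), fun hx ↦ ?_⟩
    have hx₀ : 0 < x := hx
    refine ⟨x / (x + 1), ⟨by positivity, (div_lt_one (by linarith)).mpr (by linarith)⟩, ?_⟩
    field_simp
    ring
  have h_deriv : ∀ u ∈ Ioo (0 : ℝ) 1,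
      HasDerivWithinAt (fun u ↦ u / (1 - u)) ((1 - u) ^ 2)⁻¹ (Ioo 0 1) u := fun u hu ↦ by
    have h := (hasDerivAt_id u).div ((hasDerivAt_id u).const_sub 1) (sub_ne_zero.mpr hu.2.ne')
    exact (h.congr_deriv (by simp only [id_eq]; field_simp; ring)).hasDerivWithinAt
  have h_inj : InjOn (fun u : ℝ ↦ u / (1 - u)) (Ioo 0 1) := fun u hu v hv h ↦ by
    have := hu.2; have := hv.2
    field_simp at h
    linarith
  rw [← h_image, integral_image_eq_integral_abs_deriv_smul measurableSet_Ioo h_deriv h_inj,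
    ← integral_rpow_mul_one_sub_rpow_neg hp₀ hp₁]
  refine setIntegral_congr_fun measurableSet_Ioo fun u ⟨hu₀, hu₁⟩ ↦ ?_
  have hv : 0 < 1 - u := by linarith
  have h_add : u / (1 - u) + 1 = (1 - u)⁻¹ := by field_simp; ring
  rw [smul_eq_mul, h_add, div_rpow hu₀.le hv.le, abs_of_pos (by positivity), rpow_neg hv.le,
    rpow_sub_one hv.ne']
  field_simp

theorem integral_rpow_div_add {p a : ℝ} (hp₀ : 0 < p) (hp₁ : p < 1) (ha : 0 < a) :
    ∫ x in Ioi (0 : ℝ), x ^ (p - 1) / (x + a) = a ^ (p - 1) * (π / sin (π * p)) := calc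
  _ = a • ∫ y in Ioi (0 : ℝ), (a * y) ^ (p - 1) / (a * y + a) := by
    rw [integral_comp_mul_left_Ioi' (fun x ↦ x ^ (p - 1) / (x + a)) 0 ha, mul_zero]
  _ = ∫ y in Ioi (0 : ℝ), a ^ (p - 1) * (y ^ (p - 1) / (y + 1)) := by
    rw [smul_eq_mul, ← integral_const_mul]
    refine setIntegral_congr_fun measurableSet_Ioi fun y (hy : 0 < y) ↦ ?_
    rw [mul_rpow ha.le hy.le, show a * y + a = a * (y + 1) by ring]
    field_simp
  _ = _ := by rw [integral_const_mul, integral_rpow_div_add_one hp₀ hp₁]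

theorem ofReal_add_ne_zero {x : ℝ} (hx : 0 ≤ x) {a : ℂ} (ha : 0 < a.re) : (x : ℂ) + a ≠ 0 := by
  intro h
  have := congrArg Complex.re h
  simp only [Complex.add_re, Complex.ofReal_re, Complex.zero_re] at this
  linarith

theorem continuousOn_cpow_div_add_pow (p : ℝ) {a : ℂ} (ha : 0 < a.re) (n : ℕ) :
    ContinuousOn (fun x : ℝ ↦ (x : ℂ) ^ ((p : ℂ) - 1) / (x + a) ^ n) (Ioi 0) :=
  (Complex.continuous_ofReal.continuousOn.cpow_const fun x hx ↦
    Complex.ofReal_mem_slitPlane.mpr hx).div (by fun_prop) fun x hx ↦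
      pow_ne_zero n (ofReal_add_ne_zero (le_of_lt hx) ha)

theorem norm_cpow_div_add_pow_le {p x δ : ℝ} (hx : 0 < x) (hδ : 0 ≤ δ) {a : ℂ} (ha : δ ≤ a.re)
    (n : ℕ) : ‖(x : ℂ) ^ ((p : ℂ) - 1) / (x + a) ^ n‖ ≤ x ^ (p - 1) / (x + δ) ^ n := by
  have h_re : x + δ ≤ ‖(x : ℂ) + a‖ := by
    refine le_trans ?_ (Complex.re_le_norm _)
    simpa using ha
  rw [norm_div, norm_pow, Complex.norm_cpow_eq_rpow_re_of_pos hx]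
  simp only [Complex.sub_re, Complex.ofReal_re, Complex.one_re]
  gcongr

theorem integrableOn_cpow_div_add {p : ℝ} (hp₀ : 0 < p) (hp₁ : p < 1) {a : ℂ} (ha : 0 < a.re) :
    IntegrableOn (fun x : ℝ ↦ (x : ℂ) ^ ((p : ℂ) - 1) / (x + a)) (Ioi 0) := by
  have h_cont := continuousOn_cpow_div_add_pow p ha 1
  simp only [pow_one] at h_cont
  refine Integrable.mono' (integrableOn_rpow_div_add hp₀ hp₁ ha)
    (h_cont.aestronglyMeasurable measurableSet_Ioi)
    ((ae_restrict_iff' measurableSet_Ioi).mpr (.of_forall fun x hx ↦ ?_))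
  simpa using norm_cpow_div_add_pow_le hx ha.le le_rfl 1

theorem differentiableOn_integral_cpow_div_add {p : ℝ} (hp₀ : 0 < p) (hp₁ : p < 1) :
    DifferentiableOn ℂ (fun a : ℂ ↦ ∫ x in Ioi (0 : ℝ), (x : ℂ) ^ ((p : ℂ) - 1) / (x + a))
      {a | 0 < a.re} := by
  intro a₀ (ha₀ : 0 < a₀.re)
  set δ := a₀.re / 2 with hδ_def
  have hδ : 0 < δ := by positivity
  have h_ball : ∀ b ∈ Metric.ball a₀ δ, δ ≤ b.re := fun b hb ↦ by
    have := (Complex.abs_re_le_norm (b - a₀)).trans_lt (mem_ball_iff_norm.mp hb)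
    rw [Complex.sub_re, abs_lt] at this
    linarith [hδ_def]
  have h_deriv := hasDerivAt_integral_of_dominated_loc_of_deriv_le
    (μ := volume.restrict (Ioi 0)) (Metric.ball_mem_nhds a₀ hδ)
    (F := fun b x ↦ (x : ℂ) ^ ((p : ℂ) - 1) / (x + b))
    (F' := fun b x ↦ -((x : ℂ) ^ ((p : ℂ) - 1) / (x + b) ^ 2))
    (bound := fun x ↦ δ⁻¹ * (x ^ (p - 1) / (x + δ))) ?_
    (integrableOn_cpow_div_add hp₀ hp₁ ha₀)
    ((continuousOn_cpow_div_add_pow p ha₀ 2).neg.aestronglyMeasurable measurableSet_Ioi)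
    ?_ ((integrableOn_rpow_div_add hp₀ hp₁ hδ).const_mul _) ?_
  · exact h_deriv.2.differentiableAt.differentiableWithinAt
  · filter_upwards [(isOpen_lt continuous_const Complex.continuous_re).mem_nhds ha₀] with b hb
    simpa using (continuousOn_cpow_div_add_pow p hb 1).aestronglyMeasurable
      measurableSet_Ioi
  · filter_upwards [ae_restrict_mem measurableSet_Ioi] with x (hx : 0 < x) b hb
    calc ‖-((x : ℂ) ^ ((p : ℂ) - 1) / (x + b) ^ 2)‖ ≤ x ^ (p - 1) / (x + δ) ^ 2 := by
          simpa using norm_cpow_div_add_pow_le hx hδ.le (h_ball b hb) 2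
      _ ≤ δ⁻¹ * (x ^ (p - 1) / (x + δ)) := by
          rw [pow_two, ← div_div, mul_comm, ← div_eq_mul_inv]
          exact div_le_div_of_nonneg_left (by positivity) hδ (by linarith)
  · filter_upwards [ae_restrict_mem measurableSet_Ioi] with x (hx : 0 < x) b hb
    have h_ne := ofReal_add_ne_zero hx.le (hδ.trans_le (h_ball b hb))
    have := (((hasDerivAt_id b).const_add (x : ℂ)).inv h_ne).const_mul ((x : ℂ) ^ ((p : ℂ) - 1))
    simpa [div_eq_mul_inv, neg_div] using this

theorem integral_cpow_div_add_ofReal {p t : ℝ} (hp₀ : 0 < p) (hp₁ : p < 1) (ht : 0 < t) :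
    ∫ x in Ioi (0 : ℝ), (x : ℂ) ^ ((p : ℂ) - 1) / (x + t)
      = (t : ℂ) ^ ((p : ℂ) - 1) * ((π / sin (π * p) : ℝ) : ℂ) := by
  have h_ofReal : ∫ x in Ioi (0 : ℝ), (x : ℂ) ^ ((p : ℂ) - 1) / (x + t)
      = ((∫ x in Ioi (0 : ℝ), x ^ (p - 1) / (x + t) : ℝ) : ℂ) := by
    refine (setIntegral_congr_fun measurableSet_Ioi fun x (hx : 0 < x) ↦ ?_).trans integral_ofReal
    change _ = ((x ^ (p - 1) / (x + t) : ℝ) : ℂ)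
    rw [Complex.ofReal_div, Complex.ofReal_cpow hx.le]
    push_cast
    rfl
  rw [h_ofReal, integral_rpow_div_add hp₀ hp₁ ht, Complex.ofReal_mul, Complex.ofReal_cpow ht.le]
  push_cast
  rfl

theorem integral_cpow_div_add {p : ℝ} (hp₀ : 0 < p) (hp₁ : p < 1) {a : ℂ} (ha : 0 < a.re) :
    ∫ x in Ioi (0 : ℝ), (x : ℂ) ^ ((p : ℂ) - 1) / (x + a)
      = a ^ ((p : ℂ) - 1) * ((π / sin (π * p) : ℝ) : ℂ) := by
  have h_open : IsOpen {a : ℂ | 0 < a.re} := isOpen_lt continuous_const Complex.continuous_re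
  have h_rhs : DifferentiableOn ℂ (fun a : ℂ ↦ a ^ ((p : ℂ) - 1) * ((π / sin (π * p) : ℝ) : ℂ))
      {a | 0 < a.re} := fun b (hb : 0 < b.re) ↦
    ((differentiableAt_id.cpow_const (.inl hb)).mul_const _).differentiableWithinAt
  have h_freq : ∃ᶠ z in 𝓝[≠] (1 : ℂ), ∫ x in Ioi (0 : ℝ), (x : ℂ) ^ ((p : ℂ) - 1) / (x + z)
      = z ^ ((p : ℂ) - 1) * ((π / sin (π * p) : ℝ) : ℂ) := by
    have h_tendsto : Tendsto ((↑) : ℝ → ℂ) (𝓝[≠] 1) (𝓝[≠] 1) := by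
      simpa using Complex.continuous_ofReal.continuousWithinAt.tendsto_nhdsWithin
        (x := (1 : ℝ)) (t := {(1 : ℂ)}ᶜ) fun _ _ ↦ by simp_all
    refine h_tendsto.frequently (Eventually.frequently ?_)
    filter_upwards [nhdsWithin_le_nhds (eventually_gt_nhds one_pos)] with t ht
    exact integral_cpow_div_add_ofReal hp₀ hp₁ ht
  exact ((differentiableOn_integral_cpow_div_add hp₀ hp₁).analyticOnNhd h_open)
    |>.eqOn_of_preconnected_of_frequently_eq (h_rhs.analyticOnNhd h_open)
      (convex_halfSpace_re_gt 0).isPreconnected (by simp) h_freq ha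

theorem Complex.exp_mul_I_cpow {φ : ℝ} (h₁ : -π < φ) (h₂ : φ ≤ π) (w : ℂ) :
    exp (φ * I) ^ w = exp (w * φ * I) := by
  rw [cpow_def_of_ne_zero (exp_ne_zero _), log_exp (by simpa) (by simpa)]
  ring_nf

theorem Complex.exp_mul_I_sub_exp_neg_mul_I (x : ℂ) :
    exp (x * I) - exp (-x * I) = 2 * I * sin x := by
  linear_combination (-I) * two_sin x + (exp (x * I) - exp (-x * I)) * I_sq

theorem ofReal_rpow_div_quadratic_eq {μ ψ u : ℝ} (hu : 0 ≤ u) (hψ : sin ψ ≠ 0) :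
    ((u ^ (μ - 1) / (u ^ 2 + 2 * cos ψ * u + 1) : ℝ) : ℂ)
      = ((u : ℂ) ^ ((μ : ℂ) - 1) / (u + Complex.exp (-ψ * Complex.I))
        - (u : ℂ) ^ ((μ : ℂ) - 1) / (u + Complex.exp (ψ * Complex.I)))
        / (2 * Complex.I * Complex.sin ψ) := by
  have h₁ : (u : ℂ) + Complex.exp (-ψ * Complex.I) ≠ 0 := fun h ↦ hψ <| by
    simpa [Complex.exp_re, Complex.exp_im] using congrArg Complex.im h
  have h₂ : (u : ℂ) + Complex.exp (ψ * Complex.I) ≠ 0 := fun h ↦ hψ <| by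
    simpa [Complex.exp_re, Complex.exp_im] using congrArg Complex.im h
  have h_factor : ((u ^ 2 + 2 * cos ψ * u + 1 : ℝ) : ℂ)
      = (u + Complex.exp (-ψ * Complex.I)) * (u + Complex.exp (ψ * Complex.I)) := by
    have h_prod : Complex.exp (-ψ * Complex.I) * Complex.exp (ψ * Complex.I) = 1 := by
      rw [← Complex.exp_add]; ring_nf; exact Complex.exp_zero
    push_cast
    linear_combination (u : ℂ) * Complex.two_cos ψ - h_prod
  have h_diff : Complex.exp (ψ * Complex.I) - Complex.exp (-ψ * Complex.I) ≠ 0 := by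
    rw [Complex.exp_mul_I_sub_exp_neg_mul_I]
    exact mul_ne_zero (by simp) (by exact_mod_cast hψ)
  rw [Complex.ofReal_div, h_factor, Complex.ofReal_cpow hu, ← Complex.exp_mul_I_sub_exp_neg_mul_I]
  generalize Complex.exp (ψ * Complex.I) = z₂ at *
  generalize Complex.exp (-ψ * Complex.I) = z₁ at *
  field_simp
  push_cast
  ring

theorem integral_rpow_div_quadratic_of_lt_one {μ ψ : ℝ} (hμ₀ : 0 < μ) (hμ₁ : μ < 1)
    (hψ₀ : 0 < ψ) (hψ₁ : ψ < π / 2) :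
    ∫ u in Ioi (0 : ℝ), u ^ (μ - 1) / (u ^ 2 + 2 * cos ψ * u + 1)
      = π * sin ((1 - μ) * ψ) / (sin ψ * sin (π * μ)) := by
  have h_sin : 0 < sin ψ := sin_pos_of_pos_of_lt_pi hψ₀ (by linarith)
  have h_sinμ : 0 < sin (π * μ) := sin_pos_of_pos_of_lt_pi (by positivity) (by nlinarith [pi_pos])
  set z₁ := Complex.exp (-ψ * Complex.I)
  set z₂ := Complex.exp (ψ * Complex.I)
  have hz₁ : 0 < z₁.re := by
    simpa [z₁, Complex.exp_re] using cos_pos_of_mem_Ioo ⟨by linarith, hψ₁⟩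
  have hz₂ : 0 < z₂.re := by
    simpa [z₂, Complex.exp_re] using cos_pos_of_mem_Ioo ⟨by linarith, hψ₁⟩
  have h_pow : z₁ ^ ((μ : ℂ) - 1) - z₂ ^ ((μ : ℂ) - 1)
      = 2 * Complex.I * Complex.sin ((1 - μ) * ψ : ℝ) := by
    rw [show z₁ = Complex.exp ((-ψ : ℝ) * Complex.I) by push_cast; rfl,
      Complex.exp_mul_I_cpow (by linarith) (by linarith),
      Complex.exp_mul_I_cpow (by linarith) (by linarith)]
    convert Complex.exp_mul_I_sub_exp_neg_mul_I ((1 - μ) * ψ : ℝ) using 3 <;> push_cast <;> ring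
  have h_int : ((∫ u in Ioi (0 : ℝ), u ^ (μ - 1) / (u ^ 2 + 2 * cos ψ * u + 1) : ℝ) : ℂ)
      = ((π * sin ((1 - μ) * ψ) / (sin ψ * sin (π * μ)) : ℝ) : ℂ) := calc
    _ = ∫ u in Ioi (0 : ℝ), ((u : ℂ) ^ ((μ : ℂ) - 1) / (u + z₁)
          - (u : ℂ) ^ ((μ : ℂ) - 1) / (u + z₂)) / (2 * Complex.I * Complex.sin ψ) :=
      integral_ofReal.symm.trans <| setIntegral_congr_fun measurableSet_Ioi fun u hu ↦
        ofReal_rpow_div_quadratic_eq (le_of_lt hu) h_sin.ne'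
    _ = ((∫ u in Ioi (0 : ℝ), (u : ℂ) ^ ((μ : ℂ) - 1) / (u + z₁))
          - ∫ u in Ioi (0 : ℝ), (u : ℂ) ^ ((μ : ℂ) - 1) / (u + z₂))
          / (2 * Complex.I * Complex.sin ψ) := by
      rw [integral_div, integral_sub (integrableOn_cpow_div_add hμ₀ hμ₁ hz₁)
        (integrableOn_cpow_div_add hμ₀ hμ₁ hz₂)]
    _ = _ := by
      rw [integral_cpow_div_add hμ₀ hμ₁ hz₁, integral_cpow_div_add hμ₀ hμ₁ hz₂, ← sub_mul, h_pow]
      have : Complex.sin ψ ≠ 0 := by exact_mod_cast h_sin.ne'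
      have : Complex.sin (π * μ) ≠ 0 := by exact_mod_cast h_sinμ.ne'
      push_cast
      field_simp
  exact_mod_cast h_int

theorem rpow_sub_one_mul_rpow_rpow {t : ℝ} (ht : 0 < t) {a : ℝ} (ha : a ≠ 0) (ν : ℝ) :
    t ^ (a - 1) * (t ^ a) ^ (ν / a - 1) = t ^ (ν - 1) := by
  rw [← rpow_mul ht.le, ← rpow_add ht]
  congr 1
  field_simp
  ring

theorem integrableOn_rpow_mul_comp_rpow_iff (g : ℝ → ℝ) (ν : ℝ) {a : ℝ} (ha : a ≠ 0) :
    IntegrableOn (fun t ↦ t ^ (ν - 1) * g (t ^ a)) (Ioi 0)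
      ↔ IntegrableOn (fun u ↦ u ^ (ν / a - 1) * g u) (Ioi 0) := by
  rw [← integrableOn_Ioi_comp_rpow_iff' (fun u ↦ u ^ (ν / a - 1) * g u) ha]
  refine integrableOn_congr_fun (fun t (ht : 0 < t) ↦ ?_) measurableSet_Ioi
  rw [smul_eq_mul, ← mul_assoc, rpow_sub_one_mul_rpow_rpow ht ha]

theorem integral_rpow_mul_comp_rpow (g : ℝ → ℝ) (ν : ℝ) {a : ℝ} (ha : a ≠ 0) :
    ∫ t in Ioi (0 : ℝ), t ^ (ν - 1) * g (t ^ a)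
      = |a|⁻¹ * ∫ u in Ioi (0 : ℝ), u ^ (ν / a - 1) * g u := by
  rw [← integral_comp_rpow_Ioi (fun u ↦ u ^ (ν / a - 1) * g u) ha, ← integral_const_mul]
  refine setIntegral_congr_fun measurableSet_Ioi fun t (ht : 0 < t) ↦ ?_
  rw [smul_eq_mul, ← mul_assoc, ← mul_assoc, inv_mul_cancel_left₀ (abs_ne_zero.mpr ha),
    rpow_sub_one_mul_rpow_rpow ht ha]

theorem integrableOn_rpow_div_quadratic {μ b : ℝ} (hμ₀ : 0 < μ) (hμ₂ : μ < 2) (hb : 0 ≤ b) :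
    IntegrableOn (fun u : ℝ ↦ u ^ (μ - 1) / (u ^ 2 + 2 * b * u + 1)) (Ioi 0) := by
  refine integrableOn_Ioi_of_norm_le_rpow (p := μ - 1) (q := μ - 3) (C := 1)
    (by linarith) (by linarith) ?_ (fun u hu ↦ ?_) (fun u hu ↦ ?_)
  · exact (continuousOn_id.rpow_const fun u hu ↦ .inl (ne_of_gt hu)).div (by fun_prop)
      fun u (hu : 0 < u) ↦ by positivity
  · obtain ⟨hu₀, -⟩ := hu
    rw [norm_of_nonneg (by positivity), one_mul]
    exact div_le_self (by positivity) (by nlinarith [mul_nonneg hb hu₀.le])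
  · have hu₀ : 0 < u := one_pos.trans hu
    rw [norm_of_nonneg (by positivity), one_mul, show μ - 3 = (μ - 1) - 2 by ring,
      rpow_sub hu₀ (μ - 1) 2, rpow_two]
    gcongr
    nlinarith [mul_nonneg hb hu₀.le]

theorem integral_rpow_div_quadratic_symm (μ b : ℝ) :
    ∫ u in Ioi (0 : ℝ), u ^ (μ - 1) / (u ^ 2 + 2 * b * u + 1)
      = ∫ u in Ioi (0 : ℝ), u ^ ((2 - μ) - 1) / (u ^ 2 + 2 * b * u + 1) := by
  have h := integral_rpow_mul_comp_rpow (fun u ↦ u ^ 2 / (u ^ 2 + 2 * b * u + 1)) μ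
    (a := -1) (by norm_num)
  rw [abs_neg, abs_one, inv_one, one_mul] at h
  convert h using 1 <;> refine setIntegral_congr_fun measurableSet_Ioi fun u (hu : 0 < u) ↦ ?_
  · rw [rpow_neg_one]
    field_simp
    ring
  · rw [← mul_div_assoc, ← rpow_natCast u 2, ← rpow_add hu]
    congr 2
    push_cast
    ring

theorem integral_rpow_div_quadratic {μ ψ : ℝ} (hμ₀ : 0 < μ) (hμ₂ : μ < 2) (hμ₁ : μ ≠ 1)
    (hψ₀ : 0 < ψ) (hψ₁ : ψ < π / 2) :
    ∫ u in Ioi (0 : ℝ), u ^ (μ - 1) / (u ^ 2 + 2 * cos ψ * u + 1)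
      = π * sin ((1 - μ) * ψ) / (sin ψ * sin (π * μ)) := by
  rcases hμ₁.lt_or_gt with hμ₁ | hμ₁
  · exact integral_rpow_div_quadratic_of_lt_one hμ₀ hμ₁ hψ₀ hψ₁
  · rw [integral_rpow_div_quadratic_symm, integral_rpow_div_quadratic_of_lt_one (by linarith)
      (by linarith) hψ₀ hψ₁, show (1 - (2 - μ)) * ψ = -((1 - μ) * ψ) by ring,
      show π * (2 - μ) = -(π * μ) + 2 * π by ring, sin_add_two_pi, sin_neg, sin_neg, mul_neg,
      mul_neg, neg_div_neg_eq]

theorem integrableOn_rpow_div_rpow_quadratic {ν α b : ℝ} (hν₀ : 0 < ν) (hν : ν < 2 * α)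
    (hb : 0 ≤ b) :
    IntegrableOn (fun t : ℝ ↦ t ^ (ν - 1) / (t ^ (2 * α) + 2 * b * t ^ α + 1)) (Ioi 0) := by
  have hα : 0 < α := by linarith
  have hK := integrableOn_rpow_div_quadratic (div_pos hν₀ hα) ((div_lt_iff₀ hα).mpr hν) hb
  have h := (integrableOn_rpow_mul_comp_rpow_iff (fun u ↦ (u ^ 2 + 2 * b * u + 1)⁻¹) ν
    hα.ne').mpr (hK.congr_fun (fun u _ ↦ div_eq_mul_inv _ _) measurableSet_Ioi)
  refine h.congr_fun (fun t (ht : 0 < t) ↦ ?_) measurableSet_Ioi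
  dsimp only
  rw [← rpow_two, ← rpow_mul ht.le, mul_comm α, div_eq_mul_inv]

theorem integral_rpow_div_rpow_quadratic_eq_inv_mul {α : ℝ} (hα : 0 < α) (ν b : ℝ) :
    ∫ t in Ioi (0 : ℝ), t ^ (ν - 1) / (t ^ (2 * α) + 2 * b * t ^ α + 1)
      = α⁻¹ * ∫ u in Ioi (0 : ℝ), u ^ (ν / α - 1) / (u ^ 2 + 2 * b * u + 1) := by
  have h := integral_rpow_mul_comp_rpow (fun u ↦ (u ^ 2 + 2 * b * u + 1)⁻¹) ν hα.ne'
  simp only [abs_of_pos hα, ← div_eq_mul_inv] at h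
  rw [← h]
  refine setIntegral_congr_fun measurableSet_Ioi fun t (ht : 0 < t) ↦ ?_
  rw [← rpow_two, ← rpow_mul ht.le, mul_comm α]

theorem integral_rpow_div_rpow_quadratic {α ψ r : ℝ} (hα : 0 < α) (hψ₀ : 0 < ψ)
    (hψ₁ : ψ < π / 2) (hr : r ∈ Ioo (-α) α) (hr₀ : r ≠ 0) :
    ∫ t in Ioi (0 : ℝ), t ^ (α + r - 1) / (t ^ (2 * α) + 2 * cos ψ * t ^ α + 1)
      = π * sin (r * ψ / α) / (α * sin ψ * sin (π * r / α)) := by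
  obtain ⟨hr₁, hr₂⟩ := hr
  have hμ : (α + r) / α = 1 + r / α := by field_simp
  have hr_div : -1 < r / α ∧ r / α < 1 := ⟨by rw [lt_div_iff₀ hα]; linarith,
    by rw [div_lt_iff₀ hα]; linarith⟩
  rw [integral_rpow_div_rpow_quadratic_eq_inv_mul hα, hμ, integral_rpow_div_quadratic
    (by linarith) (by linarith) (by simp [hr₀, hα.ne']) hψ₀ hψ₁,
    show (1 - (1 + r / α)) * ψ = -(r * ψ / α) by ring, show π * (1 + r / α) = π * r / α + π by ring,
    sin_add_pi, sin_neg]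
  field_simp

theorem sin_sub_mul_sin_add_sin_sub_mul_sin (x a b : ℝ) :
    sin (x - a) * sin b + sin (b - x) * sin a = sin (b - a) * sin x := by
  simp only [sin_sub]
  ring

theorem sin_pi_sub_div_pi_mul_add_eq (α s : ℝ) (hα : α ≠ 0) (hψ : sin (π - π * α) ≠ 0)
    (hA : sin (π * s / α) ≠ 0) (hB : sin (π * (s + 1) / α) ≠ 0) :
    sin (π - π * α) / π *
      (π * sin (s * (π - π * α) / α) / (α * sin (π - π * α) * sin (π * s / α))
        + π * sin ((s + 1) * (π - π * α) / α) / (α * sin (π - π * α) * sin (π * (s + 1) / α)))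
      = -(sin (π / α) * sin (π * s)) / (α * sin (π * s / α) * sin (π * (s + 1) / α)) := by
  have h := sin_sub_mul_sin_add_sin_sub_mul_sin (π * s) (π * s / α) (π * (s + 1) / α)
  rw [show s * (π - π * α) / α = -(π * s - π * s / α) by field_simp; ring,
    show (s + 1) * (π - π * α) / α = (π * (s + 1) / α - π * s) - π by field_simp; ring,
    show π / α = π * (s + 1) / α - π * s / α by field_simp; ring, sin_neg, sin_sub_pi]
  generalize sin (π - π * α) = c at hψ ⊢
  generalize sin (π * s - π * s / α) = c₁ at h ⊢
  generalize sin (π * (s + 1) / α - π * s) = c₂ at h ⊢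
  generalize sin (π * (s + 1) / α - π * s / α) = c₃ at h ⊢
  field_simp
  linear_combination -h

theorem rpow_mul_bernstein_density_eq {α s t : ℝ} (ht : 0 < t) :
    t ^ s * (sin (π * α) * t ^ (α - 1) * (1 + t) /
        (π * (t ^ (2 * α) - 2 * cos (π * α) * t ^ α + 1)))
      = sin (π - π * α) / π *
        (t ^ (α + s - 1) / (t ^ (2 * α) + 2 * cos (π - π * α) * t ^ α + 1)
          + t ^ (α + (s + 1) - 1) / (t ^ (2 * α) + 2 * cos (π - π * α) * t ^ α + 1)) := by
  rw [sin_pi_sub, cos_pi_sub, show α + s - 1 = s + (α - 1) by ring,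
    show α + (s + 1) - 1 = s + α by ring, rpow_add ht, rpow_add ht, rpow_sub_one ht.ne']
  field_simp
  ring

theorem mellin_fa (α s : ℝ) (hα : α ∈ Set.Ioo (1/2 : ℝ) 1) (hs : s ∈ Set.Ioo (-α) (α - 1)) :
    ∫ t in Set.Ioi (0:ℝ),
        t ^ s * (Real.sin (Real.pi * α) * t ^ (α - 1) * (1 + t) /
          (Real.pi * (t ^ (2 * α) - 2 * Real.cos (Real.pi * α) * t ^ α + 1))) =
      -(Real.sin (Real.pi / α) * Real.sin (Real.pi * s)) /
        (α * Real.sin (Real.pi * s / α) * Real.sin (Real.pi * (s + 1) / α)) := by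
  obtain ⟨hα₁, hα₂⟩ := hα
  obtain ⟨hs₁, hs₂⟩ := hs
  have hα₀ : 0 < α := by linarith
  have hψ₀ : 0 < π - π * α := by nlinarith [pi_pos]
  have hψ₁ : π - π * α < π / 2 := by nlinarith [pi_pos]
  have h_cos : 0 ≤ cos (π - π * α) := (cos_pos_of_mem_Ioo ⟨by linarith, hψ₁⟩).le
  rw [setIntegral_congr_fun measurableSet_Ioi fun t ht ↦ rpow_mul_bernstein_density_eq ht,
    integral_const_mul,
    integral_add (integrableOn_rpow_div_rpow_quadratic (by linarith) (by linarith) h_cos)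
      (integrableOn_rpow_div_rpow_quadratic (by linarith) (by linarith) h_cos),
    integral_rpow_div_rpow_quadratic hα₀ hψ₀ hψ₁ ⟨hs₁, by linarith⟩ (by linarith),
    integral_rpow_div_rpow_quadratic hα₀ hψ₀ hψ₁ ⟨by linarith, by linarith⟩ (by linarith)]
  refine sin_pi_sub_div_pi_mul_add_eq α s hα₀.ne'
    (sin_pos_of_pos_of_lt_pi hψ₀ (by linarith)).ne' (sin_neg_of_neg_of_neg_pi_lt ?_ ?_).ne
    (sin_pos_of_pos_of_lt_pi ?_ ?_).ne'
  · exact div_neg_of_neg_of_pos (by nlinarith [pi_pos]) hα₀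
  · rw [lt_div_iff₀ hα₀]; nlinarith [pi_pos]
  · exact div_pos (by nlinarith [pi_pos]) hα₀
  · rw [div_lt_iff₀ hα₀]; nlinarith [pi_pos]
end

section
/- For all real a, b, c, ρ > 0: (a t^{1+ρ} − b t + c ≥ 0 for all t > 0) if and only if a ≥ (ρ/c)^ρ (b/(1+ρ))^{1+ρ}. -/
/-!
By convexity of `t ↦ t ^ (1 + ρ)` (Bernoulli's inequality), `f t = a t^(1+ρ) - b t + c` is
minimised on `(0, ∞)` at its critical point `s`, where `(1 + ρ) a s^ρ = b`. There
`f s = c (1 - u)` with `u = (ρ / c) (b / (1 + ρ)) s`, so `f ≥ 0` iff `u ≤ 1` iff `u^ρ ≤ 1`,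
and `u^ρ = (ρ / c)^ρ (b / (1 + ρ))^(1+ρ) / a`.
-/

open Real

theorem rpow_add_mul_sub_le_rpow {p s t : ℝ} (hp : 1 ≤ p) (hs : 0 < s) (ht : 0 ≤ t) :
    s ^ p + p * s ^ (p - 1) * (t - s) ≤ t ^ p := by
  have hbernoulli : 1 + p * (t / s - 1) ≤ (t / s) ^ p := by
    simpa using one_add_mul_self_le_rpow_one_add (s := t / s - 1)
      (by linarith [div_nonneg ht hs.le]) hp
  have hsp : s ^ p = s ^ (p - 1) * s := by rw [← rpow_add_one hs.ne', sub_add_cancel]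
  rw [div_rpow ht hs.le, le_div_iff₀ (rpow_pos_of_pos hs p)] at hbernoulli
  calc s ^ p + p * s ^ (p - 1) * (t - s) = (1 + p * (t / s - 1)) * s ^ p := by
        rw [hsp]; field_simp
    _ ≤ t ^ p := hbernoulli

theorem mul_rpow_sub_mul_le_of_critical {a b p s t : ℝ} (ha : 0 ≤ a) (hp : 1 ≤ p) (hs : 0 < s)
    (ht : 0 ≤ t) (hb : p * a * s ^ (p - 1) = b) :
    a * s ^ p - b * s ≤ a * t ^ p - b * t := by
  have := mul_le_mul_of_nonneg_left (rpow_add_mul_sub_le_rpow hp hs ht) ha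
  rw [← hb]
  linarith

theorem poly_nonneg_iff (a b c ρ : ℝ) (ha : 0 < a) (hb : 0 < b) (hc : 0 < c) (hρ : 0 < ρ) :
    (∀ t : ℝ, 0 < t → 0 ≤ a * t ^ (1 + ρ) - b * t + c) ↔
      (ρ / c) ^ ρ * (b / (1 + ρ)) ^ (1 + ρ) ≤ a := by
  set s := (b / ((1 + ρ) * a)) ^ ρ⁻¹
  have hs : 0 < s := by positivity
  have hsρ : s ^ ρ = b / ((1 + ρ) * a) := rpow_inv_rpow (by positivity) hρ.ne'
  have hcrit : (1 + ρ) * a * s ^ (1 + ρ - 1) = b := by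
    rw [add_sub_cancel_left, hsρ]; field_simp
  set u := ρ / c * (b / (1 + ρ)) * s
  have hu : 0 ≤ u := by positivity
  have hmin_value : a * s ^ (1 + ρ) - b * s + c = c * (1 - u) := by
    simp only [u]; rw [rpow_add hs, rpow_one, hsρ]; field_simp; ring
  have huρ : u ^ ρ = (ρ / c) ^ ρ * (b / (1 + ρ)) ^ (1 + ρ) / a := by
    rw [mul_rpow (by positivity) hs.le, mul_rpow (by positivity) (by positivity), hsρ,
      rpow_add (by positivity), rpow_one]
    field_simp
  calc (∀ t : ℝ, 0 < t → 0 ≤ a * t ^ (1 + ρ) - b * t + c)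
      ↔ 0 ≤ a * s ^ (1 + ρ) - b * s + c :=
        ⟨fun h ↦ h s hs, fun h t ht ↦ by
          linarith [mul_rpow_sub_mul_le_of_critical ha.le (by linarith) hs ht.le hcrit]⟩
    _ ↔ u ≤ 1 := by rw [hmin_value, mul_nonneg_iff_of_pos_left hc, sub_nonneg]
    _ ↔ u ^ ρ ≤ 1 ^ ρ := (rpow_le_rpow_iff hu zero_le_one hρ).symm
    _ ↔ (ρ / c) ^ ρ * (b / (1 + ρ)) ^ (1 + ρ) ≤ a := by rw [huρ, one_rpow, div_le_one ha]
end

section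
/- For α ∈ (1,2), the function t ↦ −α sin(πα) t^{α−1} / (π(α−1)(t^{2α} − 2cos(πα)t^α + 1)) is a probability density on (0,∞), i.e. it is nonnegative and integrates to 1. -/
open Real MeasureTheory Filter Set

lemma arctan_integral_aux (c s : ℝ) (hs : 0 < s) :
    ∫ u in Set.Ioi (0:ℝ), 1 / ((u - c) ^ 2 + s ^ 2) =
      (Real.pi / 2 + Real.arctan (c / s)) / s := by
  have hderiv : ∀ x ∈ Set.Ioi (0:ℝ),
      HasDerivAt (fun u => Real.arctan ((u - c) / s) / s) (1 / ((x - c) ^ 2 + s ^ 2)) x := by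
    intro x _
    have h1 : HasDerivAt (fun u : ℝ => (u - c) / s) (1 / s) x := by
      simpa using ((hasDerivAt_id x).sub_const c).div_const s
    have h2 := (Real.hasDerivAt_arctan ((x - c) / s)).comp x h1
    have h3 := h2.div_const s
    refine h3.congr_deriv ?_
    have hx : (x - c) ^ 2 + s ^ 2 > 0 := by positivity
    field_simp
    ring
  have hpos : ∀ x ∈ Set.Ioi (0:ℝ), 0 ≤ 1 / ((x - c) ^ 2 + s ^ 2) := by
    intro x _; positivity
  have hcont : ContinuousWithinAt (fun u => Real.arctan ((u - c) / s) / s) (Set.Ici 0) 0 := by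
    exact ((Real.continuous_arctan.comp ((continuous_id.sub continuous_const).div_const s)).div_const s).continuousWithinAt
  have htends : Tendsto (fun u => Real.arctan ((u - c) / s) / s) atTop
      (nhds ((Real.pi / 2) / s)) := by
    apply Tendsto.div_const
    apply (Real.tendsto_arctan_atTop.mono_right nhdsWithin_le_nhds).comp
    apply Tendsto.atTop_div_const hs
    exact tendsto_atTop_add_const_right _ _ tendsto_id
  have := integral_Ioi_of_hasDerivAt_of_nonneg hcont hderiv hpos htends
  rw [this]
  rw [show ((0:ℝ) - c) / s = -(c / s) by ring, Real.arctan_neg]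
  ring

theorem Ualpha_density (α : ℝ) (hα : α ∈ Set.Ioo (1:ℝ) 2) :
    (∀ t : ℝ, 0 < t →
        0 ≤ -α * Real.sin (Real.pi * α) * t ^ (α - 1) /
          (Real.pi * (α - 1) * (t ^ (2 * α) - 2 * Real.cos (Real.pi * α) * t ^ α + 1))) ∧
      ∫ t in Set.Ioi (0:ℝ),
          -α * Real.sin (Real.pi * α) * t ^ (α - 1) /
            (Real.pi * (α - 1) * (t ^ (2 * α) - 2 * Real.cos (Real.pi * α) * t ^ α + 1)) = 1 := by
  obtain ⟨hα1, hα2⟩ := hα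
  have hπ := Real.pi_pos
  set c := Real.cos (Real.pi * α) with hc
  set s := -Real.sin (Real.pi * α) with hs
  have hsin : Real.sin (Real.pi * α) < 0 := by
    have h1 : Real.sin (Real.pi * α - Real.pi) > 0 := by
      apply Real.sin_pos_of_pos_of_lt_pi <;> nlinarith
    rw [Real.sin_sub_pi] at h1
    linarith
  have hspos : 0 < s := by simp [hs]; linarith
  have hcs : c ^ 2 + s ^ 2 = 1 := by
    rw [hc, hs]; nlinarith [Real.sin_sq_add_cos_sq (Real.pi * α)]
  have hD : ∀ t : ℝ, 0 < t →
      t ^ (2 * α) - 2 * Real.cos (Real.pi * α) * t ^ α + 1 = (t ^ α - c) ^ 2 + s ^ 2 := by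
    intro t ht
    have h2 : t ^ (2 * α) = t ^ α * t ^ α := by
      rw [two_mul, Real.rpow_add ht]
    rw [h2, hc]
    nlinarith [hcs]
  have hDpos : ∀ t : ℝ, 0 < t →
      0 < t ^ (2 * α) - 2 * Real.cos (Real.pi * α) * t ^ α + 1 := by
    intro t ht; rw [hD t ht]; positivity
  constructor
  · intro t ht
    apply div_nonneg
    · have h0 := Real.rpow_nonneg ht.le (α - 1)
      have h1 : (0:ℝ) ≤ -α * Real.sin (Real.pi * α) := by nlinarith
      exact mul_nonneg h1 h0
    · have h2 := (hDpos t ht).le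
      have h3 : (0:ℝ) ≤ Real.pi * (α - 1) := by nlinarith
      exact mul_nonneg h3 h2
  · -- change of variables u = t ^ α
    set g : ℝ → ℝ := fun u => s / (Real.pi * (α - 1)) * (1 / ((u - c) ^ 2 + s ^ 2)) with hg
    have hstep : ∫ t in Set.Ioi (0:ℝ),
          -α * Real.sin (Real.pi * α) * t ^ (α - 1) /
            (Real.pi * (α - 1) * (t ^ (2 * α) - 2 * Real.cos (Real.pi * α) * t ^ α + 1))
        = ∫ t in Set.Ioi (0:ℝ), (α * t ^ (α - 1)) • g (t ^ α) := by
      apply setIntegral_congr_fun measurableSet_Ioi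
      intro t ht
      have hD' := hD t ht
      have hD2 : (0:ℝ) < (t ^ α - c) ^ 2 + s ^ 2 := by positivity
      have hα1' : α - 1 ≠ 0 := by linarith
      dsimp only
      rw [hD', smul_eq_mul, hg]
      simp only [hs]
      field_simp
    rw [hstep, integral_comp_rpow_Ioi_of_pos (by linarith : (0:ℝ) < α)]
    have : ∫ u in Set.Ioi (0:ℝ), g u
        = s / (Real.pi * (α - 1)) * ∫ u in Set.Ioi (0:ℝ), 1 / ((u - c) ^ 2 + s ^ 2) := by
      rw [hg, integral_const_mul]
    rw [this, arctan_integral_aux c s hspos]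
    have harctan : Real.arctan (c / s) = Real.pi * α - 3 * Real.pi / 2 := by
      have hsin32 : Real.sin (3 * Real.pi / 2) = -1 := by
        rw [show (3 * Real.pi / 2 : ℝ) = Real.pi + Real.pi / 2 by ring, Real.sin_add]; simp
      have hcos32 : Real.cos (3 * Real.pi / 2) = 0 := by
        rw [show (3 * Real.pi / 2 : ℝ) = Real.pi + Real.pi / 2 by ring, Real.cos_add]; simp
      have htan : Real.tan (Real.pi * α - 3 * Real.pi / 2) = c / s := by
        rw [Real.tan_eq_sin_div_cos, Real.sin_sub, Real.cos_sub, hsin32, hcos32, hc, hs]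
        ring_nf
      rw [← htan, Real.arctan_tan] <;> nlinarith
    rw [harctan]
    have h1 : Real.pi * (α - 1) ≠ 0 := ne_of_gt (by nlinarith)
    field_simp
    ring
end

section
/- For every α ∈ (0,1), the Mittag-Leffler random variable identity holds: if M_α has the law of Z_α^{−α} (Z_α the standard positive α-stable variable with E[e^{-λZ_α}] = e^{-λ^α}), then E_α(−x) = E[e^{-x M_α}] for all x ≥ 0, i.e. ∑_{n≥0} (−x)^n/Γ(1+αn) = E[exp(−x Z_α^{−α})]. -/
/-!
Write `M = Z_α ^ (-α)`. From `Γ(s) t^(-s) = ∫₀^∞ l^(s-1) e^(-l t) dl` and Tonelli, the negative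
moments of `Z_α` are Mellin transforms of its Laplace transform `e^(-l^α)`, which gives
`E[Z_α^(-s)] = Γ(1 + s/α) / Γ(1 + s)`; in particular `E[M^n] = n! / Γ(1 + α n)`. Expanding
`e^(-x M)` in its power series and integrating term by term yields `E_α(-x)`; the interchange is
justified because `E_α` is entire, which follows from Gautschi's inequality
`Γ(z + 1) ≤ (z + α)^(1-α) Γ(z + α)`, a consequence of the log-convexity of `Γ`.
-/

open Real MeasureTheory Set Filter Nat

namespace Real

variable {α : ℝ}

theorem Gamma_add_one_le_rpow_mul_Gamma_add (hα0 : 0 < α) (hα1 : α < 1) {z : ℝ}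
    (hz : 0 < z + α) : Gamma (z + 1) ≤ (z + α) ^ (1 - α) * Gamma (z + α) := by
  have hΓ : 0 < Gamma (z + α) := Gamma_pos_of_pos hz
  calc Gamma (z + 1) = Gamma (α * (z + α) + (1 - α) * (z + α + 1)) := by congr 1; ring
    _ ≤ Gamma (z + α) ^ α * Gamma (z + α + 1) ^ (1 - α) :=
      Gamma_mul_add_mul_le_rpow_Gamma_mul_rpow_Gamma hz (by linarith) hα0 (by linarith)
        (by ring)
    _ = (z + α) ^ (1 - α) * Gamma (z + α) := by
      rw [Gamma_add_one hz.ne', mul_rpow hz.le hΓ.le, mul_left_comm, ← rpow_add hΓ]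
      norm_num

theorem rpow_mul_Gamma_add_one_le (hα0 : 0 < α) (hα1 : α < 1) {z : ℝ} (hz : 0 < z + α) :
    (z + α) ^ α * Gamma (z + 1) ≤ Gamma (z + α + 1) := by
  calc (z + α) ^ α * Gamma (z + 1)
      ≤ (z + α) ^ α * ((z + α) ^ (1 - α) * Gamma (z + α)) := by
        gcongr
        exact Gamma_add_one_le_rpow_mul_Gamma_add hα0 hα1 hz
    _ = Gamma (z + α + 1) := by
      rw [Gamma_add_one hz.ne', ← mul_assoc, ← rpow_add hz]
      norm_num

end Real

theorem summable_pow_div_Gamma_one_add_mul {α : ℝ} (hα0 : 0 < α) (hα1 : α < 1) (x : ℝ) :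
    Summable fun n : ℕ => x ^ n / Gamma (1 + α * n) := by
  refine summable_of_ratio_norm_eventually_le (r := 1 / 2) (by norm_num) ?_
  have hgrowth : Tendsto (fun n : ℕ => (α * n + α) ^ α) atTop atTop :=
    (tendsto_rpow_atTop hα0).comp <| tendsto_atTop_add_const_right _ _ <|
      tendsto_natCast_atTop_atTop.const_mul_atTop hα0
  filter_upwards [hgrowth.eventually_ge_atTop (2 * |x|)] with n hn
  have hz : 0 < α * n + α := by positivity
  have hΓ : 0 < Gamma (1 + α * n) := Gamma_pos_of_pos (by positivity)
  have hstep : (α * n + α) ^ α * Gamma (1 + α * n) ≤ Gamma (1 + α * ↑(n + 1)) := by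
    convert rpow_mul_Gamma_add_one_le hα0 hα1 hz using 2
    · rw [add_comm]
    · push_cast; ring
  rw [norm_div, norm_div, norm_pow, norm_pow, Real.norm_eq_abs, norm_of_nonneg hΓ.le,
    norm_of_nonneg (by positivity), div_le_iff₀ (by positivity), pow_succ]
  calc |x| ^ n * |x|
      = 1 / 2 * (|x| ^ n / Gamma (1 + α * n)) * (2 * |x| * Gamma (1 + α * n)) := by
        field_simp
    _ ≤ 1 / 2 * (|x| ^ n / Gamma (1 + α * n)) * Gamma (1 + α * ↑(n + 1)) := by
        gcongr
        exact (mul_le_mul_of_nonneg_right hn hΓ.le).trans hstep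

section Moments

variable {Ω : Type*} [MeasurableSpace Ω] {ν : Measure Ω}

theorem lintegral_ofReal_eq_ofReal_integral_of_ne_zero {f : Ω → ℝ} (hf : 0 ≤ᵐ[ν] f)
    (h : ∫ ω, f ω ∂ν ≠ 0) :
    ∫⁻ ω, ENNReal.ofReal (f ω) ∂ν = ENNReal.ofReal (∫ ω, f ω ∂ν) :=
  (ofReal_integral_eq_lintegral_ofReal (.of_integral_ne_zero h) hf).symm

theorem integral_exp_mul_eq_tsum {g : Ω → ℝ} (hg : 0 ≤ᵐ[ν] g)
    (hint : ∀ n : ℕ, Integrable (fun ω => g ω ^ n) ν) (x : ℝ)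
    (hsum : Summable fun n : ℕ => |x| ^ n / n ! * ∫ ω, g ω ^ n ∂ν) :
    ∫ ω, exp (x * g ω) ∂ν = ∑' n : ℕ, x ^ n / n ! * ∫ ω, g ω ^ n ∂ν := by
  have hnorm : ∀ n : ℕ, ∫ ω, ‖x ^ n / n ! * g ω ^ n‖ ∂ν = |x| ^ n / n ! * ∫ ω, g ω ^ n ∂ν := by
    intro n
    rw [← integral_const_mul]
    refine integral_congr_ae (hg.mono fun ω hω => ?_)
    simp only [norm_mul, norm_div, norm_pow, Real.norm_eq_abs, Nat.abs_cast, abs_of_nonneg hω]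
  simp_rw [← integral_const_mul]
  rw [integral_tsum_of_summable_integral_norm (fun n => (hint n).const_mul _)
    (by simpa only [hnorm] using hsum)]
  congr 1 with ω
  rw [exp_eq_exp_ℝ, NormedSpace.exp_eq_tsum_div]
  exact tsum_congr fun n => by ring

end Moments

section Laplace

variable {ν : Measure ℝ} {α : ℝ}

theorem lintegral_rpow_mul_exp_neg_mul {s t : ℝ} (hs : 0 < s) (ht : 0 < t) :
    ∫⁻ l in Ioi 0, ENNReal.ofReal (l ^ (s - 1)) * ENNReal.ofReal (exp (-l * t)) =
      ENNReal.ofReal (Gamma s) * ENNReal.ofReal (t ^ (-s)) := by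
  have h : ∫ l in Ioi 0, l ^ (s - 1) * exp (-l * t) = Gamma s * t ^ (-s) := by
    simp_rw [neg_mul, mul_comm _ t]
    rw [integral_rpow_mul_exp_neg_mul_Ioi hs ht, one_div, inv_rpow ht.le, ← rpow_neg ht.le,
      mul_comm]
  simp_rw [← ENNReal.ofReal_mul' (exp_nonneg _), ← ENNReal.ofReal_mul (Gamma_pos_of_pos hs).le]
  rw [lintegral_ofReal_eq_ofReal_integral_of_ne_zero, h]
  · exact (ae_restrict_mem measurableSet_Ioi).mono fun l (hl : 0 < l) => by positivity
  · rw [h]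
    exact (mul_pos (Gamma_pos_of_pos hs) (rpow_pos_of_pos ht _)).ne'

theorem Gamma_mul_lintegral_rpow_neg [SFinite ν] (hpos : ∀ᵐ t ∂ν, 0 < t) {s : ℝ} (hs : 0 < s) :
    ENNReal.ofReal (Gamma s) * ∫⁻ t, ENNReal.ofReal (t ^ (-s)) ∂ν =
      ∫⁻ l in Ioi 0, ENNReal.ofReal (l ^ (s - 1)) * ∫⁻ t, ENNReal.ofReal (exp (-l * t)) ∂ν := by
  calc ENNReal.ofReal (Gamma s) * ∫⁻ t, ENNReal.ofReal (t ^ (-s)) ∂ν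
      = ∫⁻ t, (∫⁻ l in Ioi 0,
          ENNReal.ofReal (l ^ (s - 1)) * ENNReal.ofReal (exp (-l * t))) ∂ν := by
        rw [← lintegral_const_mul' _ _ ENNReal.ofReal_ne_top]
        exact lintegral_congr_ae <|
          hpos.mono fun t ht => (lintegral_rpow_mul_exp_neg_mul hs ht).symm
    _ = ∫⁻ l in Ioi 0, ∫⁻ t,
          ENNReal.ofReal (l ^ (s - 1)) * ENNReal.ofReal (exp (-l * t)) ∂ν :=
        lintegral_lintegral_swap <| Measurable.aemeasurable <| by fun_prop
    _ = _ := lintegral_congr fun l => lintegral_const_mul' _ _ ENNReal.ofReal_ne_top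

theorem isProbabilityMeasure_of_laplace (hα : 0 < α)
    (hlaplace : ∀ l : ℝ, 0 ≤ l → ∫ t, exp (-l * t) ∂ν = exp (-l ^ α)) :
    IsProbabilityMeasure ν := by
  have h := hlaplace 0 le_rfl
  simp only [neg_zero, zero_mul, exp_zero, zero_rpow hα.ne', integral_const, smul_eq_mul,
    mul_one] at h
  exact ⟨ENNReal.toReal_eq_one_iff _ |>.mp h⟩

theorem lintegral_rpow_neg_of_laplace (hα : 0 < α) (hpos : ∀ᵐ t ∂ν, 0 < t)
    (hlaplace : ∀ l : ℝ, 0 ≤ l → ∫ t, exp (-l * t) ∂ν = exp (-l ^ α)) {s : ℝ} (hs : 0 ≤ s) :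
    ∫⁻ t, ENNReal.ofReal (t ^ (-s)) ∂ν = ENNReal.ofReal (Gamma (1 + s / α) / Gamma (1 + s)) := by
  have := isProbabilityMeasure_of_laplace hα hlaplace
  rcases hs.eq_or_lt with rfl | hs
  · simp
  have hmellin : ∫⁻ l in Ioi 0, ENNReal.ofReal (l ^ (s - 1)) *
      ∫⁻ t, ENNReal.ofReal (exp (-l * t)) ∂ν = ENNReal.ofReal (Gamma (s / α) / α) := by
    have hint : ∫ l in Ioi 0, l ^ (s - 1) * exp (-l ^ α) = Gamma (s / α) / α := by
      rw [integral_rpow_mul_exp_neg_rpow hα (by linarith), sub_add_cancel, one_div_mul_eq_div]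
    calc _ = ∫⁻ l in Ioi 0, ENNReal.ofReal (l ^ (s - 1) * exp (-l ^ α)) := by
          refine setLIntegral_congr_fun measurableSet_Ioi fun l (hl : 0 < l) => ?_
          rw [ENNReal.ofReal_mul' (exp_nonneg _), ← hlaplace l hl.le,
            lintegral_ofReal_eq_ofReal_integral_of_ne_zero (ae_of_all _ fun t => (exp_pos _).le)
              (by rw [hlaplace l hl.le]; exact (exp_pos _).ne')]
      _ = _ := by
          rw [lintegral_ofReal_eq_ofReal_integral_of_ne_zero, hint]
          · exact (ae_restrict_mem measurableSet_Ioi).mono fun l (hl : 0 < l) => by positivity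
          · rw [hint]
            exact (div_pos (Gamma_pos_of_pos (div_pos hs hα)) hα).ne'
  have hΓ := Gamma_pos_of_pos hs
  have hratio : Gamma (1 + s / α) / Gamma (1 + s) = Gamma (s / α) / α / Gamma s := by
    rw [add_comm 1, add_comm 1, Gamma_add_one hs.ne', Gamma_add_one (div_pos hs hα).ne']
    field_simp
  rw [hratio, ENNReal.ofReal_div_of_pos hΓ, ENNReal.eq_div_iff (by simpa using hΓ)
    ENNReal.ofReal_ne_top, Gamma_mul_lintegral_rpow_neg hpos hs, hmellin]

theorem integral_rpow_neg_pow_of_laplace (hα : 0 < α) (hpos : ∀ᵐ t ∂ν, 0 < t)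
    (hlaplace : ∀ l : ℝ, 0 ≤ l → ∫ t, exp (-l * t) ∂ν = exp (-l ^ α)) (n : ℕ) :
    Integrable (fun t => (t ^ (-α)) ^ n) ν ∧
      ∫ t, (t ^ (-α)) ^ n ∂ν = n ! / Gamma (1 + α * n) := by
  have hpow : ∀ᵐ t ∂ν, (t ^ (-α)) ^ n = t ^ (-(α * n)) :=
    hpos.mono fun t ht => by rw [← rpow_natCast, ← rpow_mul ht.le, neg_mul]
  have hlint : ∫⁻ t, ENNReal.ofReal ((t ^ (-α)) ^ n) ∂ν =
      ENNReal.ofReal (n ! / Gamma (1 + α * n)) := by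
    rw [lintegral_congr_ae (hpow.mono fun t ht => by rw [ht]),
      lintegral_rpow_neg_of_laplace hα hpos hlaplace (by positivity),
      mul_div_cancel_left₀ _ hα.ne', add_comm, Gamma_nat_eq_factorial]
  have hΓ : 0 < Gamma (1 + α * n) := Gamma_pos_of_pos (by positivity)
  have hint : ∫ t, (t ^ (-α)) ^ n ∂ν = n ! / Gamma (1 + α * n) := by
    rw [integral_eq_lintegral_of_nonneg_ae (hpos.mono fun t ht => by positivity) (by fun_prop),
      hlint, ENNReal.toReal_ofReal (by positivity)]
  exact ⟨.of_integral_ne_zero (by rw [hint]; positivity), hint⟩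

end Laplace

theorem pollard_representation_general (α : ℝ) (hα : α ∈ Set.Ioo (0:ℝ) 1)
    (μ : Measure ℝ)
    -- μ is the law of the standard positive α-stable random variable Z_α :
    (hlaplace : ∀ l : ℝ, 0 ≤ l →
      ∫ t in Set.Ioi (0:ℝ), Real.exp (-l * t) ∂μ = Real.exp (-(l ^ α))) :
    ∀ x : ℝ, 0 ≤ x →
      ∑' n : ℕ, (-x) ^ n / Real.Gamma (1 + α * n) =
        ∫ t in Set.Ioi (0:ℝ), Real.exp (-x * t ^ (-α)) ∂μ := by
  intro x _
  have hpos : ∀ᵐ t ∂μ.restrict (Ioi 0), 0 < t := ae_restrict_mem measurableSet_Ioi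
  have hmoment := integral_rpow_neg_pow_of_laplace hα.1 hpos hlaplace
  have hterm (y : ℝ) (n : ℕ) :
      y ^ n / n ! * (n ! / Gamma (1 + α * n)) = y ^ n / Gamma (1 + α * n) := by
    field_simp
  rw [integral_exp_mul_eq_tsum (hpos.mono fun t ht => (rpow_pos_of_pos ht _).le)
    (fun n => (hmoment n).1) (-x)]
  · simp_rw [(hmoment _).2, hterm]
  · simpa only [(hmoment _).2, hterm] using summable_pow_div_Gamma_one_add_mul hα.1 hα.2 |-x|

theorem pollard_representation (α : ℝ) (hα : α ∈ Set.Ioo (0:ℝ) 1)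
    (μ : Measure ℝ) (hprob : IsProbabilityMeasure μ) (hμ0 : μ {x | x ≤ 0} = 0)
    -- μ is the law of the standard positive α-stable random variable Z_α :
    (hlaplace : ∀ l : ℝ, 0 ≤ l →
      ∫ t in Set.Ioi (0:ℝ), Real.exp (-l * t) ∂μ = Real.exp (-(l ^ α))) :
    ∀ x : ℝ, 0 ≤ x →
      ∑' n : ℕ, (-x) ^ n / Real.Gamma (1 + α * n) =
        ∫ t in Set.Ioi (0:ℝ), Real.exp (-x * t ^ (-α)) ∂μ :=
  pollard_representation_general α hα μ hlaplace
end
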